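/- arXiv:2103.10713 — 10 statements merged into one kernel-verified Lean document; each statement's English description precedes it below -/
import Mathlib

section
/- If G is an r-regular graph that admits a total domatic coloring with r colors, then every color class induces a perfect matching on itself (in particular each color class has even cardinality) and G contains a perfect matching. -/
open SimpleGraph Finset

/-- A domatic `k`-coloring: every vertex sees all `k` colors in its closed neighborhood. -/
def IsDomaticColoring {V : Type*} (G : SimpleGraph V) (k : ℕ) (f : V → Fin k) : Prop :=
  ∀ v : V, ∀ c : Fin k, ∃ u : V, (u = v ∨ G.Adj v u) ∧ f u = c

/-- A total domatic `k`-coloring: every vertex sees all `k` colors in its open neighborhood. -/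
def IsTotalDomaticColoring {V : Type*} (G : SimpleGraph V) (k : ℕ) (f : V → Fin k) : Prop :=
  ∀ v : V, ∀ c : Fin k, ∃ u : V, G.Adj v u ∧ f u = c

/-- The domatic number `d(G)`. -/
noncomputable def domaticNumber {V : Type*} (G : SimpleGraph V) : ℕ :=
  sSup {k | ∃ f : V → Fin k, IsDomaticColoring G k f}

/-- The total domatic number `d_t(G)`. -/
noncomputable def totalDomaticNumber {V : Type*} (G : SimpleGraph V) : ℕ :=
  sSup {k | ∃ f : V → Fin k, IsTotalDomaticColoring G k f}

def IsDominatingSet {V : Type*} (G : SimpleGraph V) (D : Set V) : Prop :=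
  ∀ v : V, v ∈ D ∨ ∃ u ∈ D, G.Adj v u

def IsTotalDominatingSet {V : Type*} (G : SimpleGraph V) (D : Set V) : Prop :=
  ∀ v : V, ∃ u ∈ D, G.Adj v u

noncomputable def dominationNumber {V : Type*} (G : SimpleGraph V) [Fintype V] : ℕ :=
  sInf {n | ∃ D : Finset V, D.card = n ∧ IsDominatingSet G ↑D}

noncomputable def totalDominationNumber {V : Type*} (G : SimpleGraph V) [Fintype V] : ℕ :=
  sInf {n | ∃ D : Finset V, D.card = n ∧ IsTotalDominatingSet G ↑D}

/-- An injective `k`-coloring: vertices with a common neighbor get distinct colors. -/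
def IsInjectiveColoring {V : Type*} (G : SimpleGraph V) (k : ℕ) (f : V → Fin k) : Prop :=
  ∀ u w v : V, G.Adj v u → G.Adj v w → u ≠ w → f u ≠ f w

noncomputable def injChromaticNumber {V : Type*} (G : SimpleGraph V) : ℕ :=
  sInf {k | ∃ f : V → Fin k, IsInjectiveColoring G k f}

def NoIsolated {V : Type*} (G : SimpleGraph V) : Prop := ∀ v : V, ∃ u, G.Adj v u

/-- The Hamming graph `H(n,q)`: vertices differ in exactly one coordinate. -/
def hammingGraph (n q : ℕ) : SimpleGraph (Fin n → Fin q) :=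
  SimpleGraph.fromRel (fun x y => ∃ i, x i ≠ y i ∧ ∀ j, j ≠ i → x j = y j)

/-- The hypercube `Q n`. -/
def hypercube (n : ℕ) : SimpleGraph (Fin n → Fin 2) := hammingGraph n 2

/-- The torus `C_{k 0} □ ⋯ □ C_{k (d-1)}`. -/
def torusGraph (d : ℕ) (k : Fin d → ℕ) : SimpleGraph (∀ i : Fin d, ZMod (k i)) :=
  SimpleGraph.fromRel (fun x y => ∃ i, x i = y i + 1 ∧ ∀ j, j ≠ i → x j = y j)

/-!
A vertex of degree at most `k` that sees all `k` colors in its open neighborhood sees each color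
exactly once: the coloring maps its neighborhood onto `Fin k`, hence bijectively. So when every
degree is at most `k`, the monochromatic edges form a perfect matching of `G`, and this matching
restricts to a perfect matching of each color class, which therefore has even size.
-/

namespace SimpleGraph

variable {V α : Type*} {G : SimpleGraph V}

def monochromaticSubgraph (G : SimpleGraph V) (f : V → α) : G.Subgraph where
  verts := Set.univ
  Adj a b := G.Adj a b ∧ f a = f b
  adj_sub h := h.1
  edge_vert _ := Set.mem_univ _
  symm := ⟨fun _ _ h => ⟨h.1.symm, h.2.symm⟩⟩

lemma Subgraph.IsPerfectMatching.induce_preimage_isMatching {M : G.Subgraph}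
    (hM : M.IsPerfectMatching) {f : V → α} (hf : ∀ ⦃a b⦄, M.Adj a b → f a = f b)
    (c : α) :
    (M.induce (f ⁻¹' {c})).IsMatching := by
  rintro v (hv : f v = c)
  obtain ⟨w, hvw, hw⟩ := Subgraph.isPerfectMatching_iff.mp hM v
  refine ⟨w, ⟨hv, (hf hvw).symm.trans hv, hvw⟩, fun u hu => hw u hu.2.2⟩

end SimpleGraph

section TotalDomatic

variable {V : Type*} {G : SimpleGraph V} {k : ℕ} {f : V → Fin k}

lemma IsTotalDomaticColoring.injOn_neighborFinset (hf : IsTotalDomaticColoring G k f) (v : V)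
    [Fintype (G.neighborSet v)] (hdeg : G.degree v ≤ k) :
    Set.InjOn f (G.neighborFinset v) := by
  refine Finset.injOn_of_surjOn_of_card_le (t := Finset.univ) f (fun _ _ => Finset.mem_univ _)
    (fun c _ => ?_) (by simpa using hdeg)
  obtain ⟨u, hvu, rfl⟩ := hf v c
  exact ⟨u, by simpa using hvu, rfl⟩

lemma IsTotalDomaticColoring.existsUnique_adj_color_eq (hf : IsTotalDomaticColoring G k f)
    {v : V} [Fintype (G.neighborSet v)] (hdeg : G.degree v ≤ k) (c : Fin k) :
    ∃! u, G.Adj v u ∧ f u = c := by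
  obtain ⟨u, hvu, hu⟩ := hf v c
  refine ⟨u, ⟨hvu, hu⟩, fun w ⟨hvw, hw⟩ => ?_⟩
  exact hf.injOn_neighborFinset v hdeg (by simpa using hvw) (by simpa using hvu) (hw.trans hu.symm)

lemma IsTotalDomaticColoring.isPerfectMatching_monochromaticSubgraph
    (hf : IsTotalDomaticColoring G k f) [G.LocallyFinite] (hdeg : ∀ v, G.degree v ≤ k) :
    (G.monochromaticSubgraph f).IsPerfectMatching := by
  refine Subgraph.isPerfectMatching_iff.mpr fun v => ?_
  obtain ⟨u, ⟨hvu, hu⟩, huniq⟩ := hf.existsUnique_adj_color_eq (hdeg v) (f v)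
  exact ⟨u, ⟨hvu, hu.symm⟩, fun w ⟨hvw, hw⟩ => huniq w ⟨hvw, hw.symm⟩⟩

end TotalDomatic

theorem color_classes_perfect_matching_general {V : Type*} [Fintype V]
    (G : SimpleGraph V) [DecidableRel G.Adj] (r : ℕ)
    (hreg : G.IsRegularOfDegree r) (f : V → Fin r) (hf : IsTotalDomaticColoring G r f) :
    (∀ v : V, ∃! u : V, G.Adj v u ∧ f u = f v) ∧
    (∀ c : Fin r, Even ((Finset.univ.filter (fun v => f v = c)).card)) ∧
    (∃ M : G.Subgraph, M.IsPerfectMatching) := by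
  have hdeg : ∀ v, G.degree v ≤ r := fun v => (hreg v).le
  have hM := hf.isPerfectMatching_monochromaticSubgraph hdeg
  refine ⟨fun v => hf.existsUnique_adj_color_eq (hdeg v) (f v), fun c => ?_, ⟨_, hM⟩⟩
  classical
  simpa [Set.ncard_eq_toFinset_card'] using
    (hM.induce_preimage_isMatching (f := f) (fun _ _ h => h.2) c).even_card

theorem color_classes_perfect_matching {V : Type*} [Fintype V] [DecidableEq V]
    (G : SimpleGraph V) [DecidableRel G.Adj] (r : ℕ)
    (hreg : G.IsRegularOfDegree r) (f : V → Fin r) (hf : IsTotalDomaticColoring G r f) :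
    (∀ v : V, ∃! u : V, G.Adj v u ∧ f u = f v) ∧
    (∀ c : Fin r, Even ((Finset.univ.filter (fun v => f v = c)).card)) ∧
    (∃ M : G.Subgraph, M.IsPerfectMatching) :=
  color_classes_perfect_matching_general G r hreg f hf
end

section
/- If G is an r-regular graph admitting a total domatic coloring with r colors, then the total domination number of G equals |V(G)|/r. -/
open SimpleGraph Finset

theorem totalDomination_of_total_domatic {V : Type*} [Fintype V] (G : SimpleGraph V) [DecidableRel G.Adj]
    (r : ℕ) (hreg : G.IsRegularOfDegree r)
    (f : V → Fin r) (hf : IsTotalDomaticColoring G r f) :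
    totalDominationNumber G = Fintype.card V / r := by
  classical
  rcases Nat.eq_zero_or_pos r with hr | hr
  · subst hr
    simp only [Nat.div_zero, totalDominationNumber]
    by_cases hV : Nonempty V
    · have hempty : {n | ∃ D : Finset V, D.card = n ∧ IsTotalDominatingSet G ↑D} = ∅ := by
        ext n
        simp only [Set.mem_setOf_eq, Set.mem_empty_iff_false, iff_false, not_exists]
        rintro D ⟨-, hD⟩
        obtain ⟨v⟩ := hV
        obtain ⟨u, _, hadj⟩ := hD v
        have h0 : G.degree v = 0 := hreg v
        have : u ∈ G.neighborFinset v := by simpa using hadj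
        rw [SimpleGraph.degree, Finset.card_eq_zero] at h0
        simp [h0] at this
      rw [hempty, Nat.sInf_empty]
    · have h0 : (0 : ℕ) ∈ {n | ∃ D : Finset V, D.card = n ∧ IsTotalDominatingSet G ↑D} :=
        ⟨∅, rfl, fun v => absurd ⟨v⟩ hV⟩
      exact Nat.le_antisymm (Nat.sInf_le h0) (Nat.zero_le _)
  · set c0 : Fin r := ⟨0, hr⟩
    set D : Finset V := Finset.univ.filter (fun u => f u = c0) with hD
    -- each vertex has exactly one neighbor of each color
    have key : ∀ (v : V) (c : Fin r),
        ((G.neighborFinset v).filter (fun u => f u = c)).card = 1 := by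
      intro v c
      have hsum : ∑ c : Fin r, ((G.neighborFinset v).filter (fun u => f u = c)).card
          = (G.neighborFinset v).card :=
        (Finset.card_eq_sum_card_fiberwise (fun u _ => Finset.mem_univ (f u))).symm
      have hcard : (G.neighborFinset v).card = r := hreg v
      have hpos : ∀ c : Fin r, 1 ≤ ((G.neighborFinset v).filter (fun u => f u = c)).card := by
        intro c
        obtain ⟨u, hu, hfu⟩ := hf v c
        have : u ∈ (G.neighborFinset v).filter (fun u => f u = c) := by
          simp [SimpleGraph.mem_neighborFinset, hu, hfu]
        exact Finset.card_pos.mpr ⟨u, this⟩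
      by_contra hne
      have h2 : 2 ≤ ((G.neighborFinset v).filter (fun u => f u = c)).card := by
        have := hpos c; omega
      have hlt : ∑ c : Fin r, 1 < ∑ c : Fin r, ((G.neighborFinset v).filter (fun u => f u = c)).card :=
        Finset.sum_lt_sum (fun c _ => hpos c) ⟨c, Finset.mem_univ c, by omega⟩
      simp only [Finset.sum_const, Finset.card_univ, Fintype.card_fin, smul_eq_mul, mul_one]
        at hlt
      omega
    have hone : ∀ v : V, (D.filter (fun u => G.Adj v u)).card = 1 := by
      intro v
      have : D.filter (fun u => G.Adj v u)
          = (G.neighborFinset v).filter (fun u => f u = c0) := by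
        ext u
        simp [hD, SimpleGraph.mem_neighborFinset, and_comm]
      rw [this]; exact key v c0
    -- double counting : r * D.card = card V
    have hcount : r * D.card = Fintype.card V := by
      have h1 : ∑ v : V, (D.filter (fun u => G.Adj v u)).card = Fintype.card V := by
        simp [hone]
      have h2 : ∑ v : V, (D.filter (fun u => G.Adj v u)).card
          = ∑ u ∈ D, (Finset.univ.filter (fun v : V => G.Adj v u)).card := by
        simp only [Finset.card_filter]
        exact Finset.sum_comm
      have h3 : ∀ u : V, (Finset.univ.filter (fun v : V => G.Adj v u)).card = r := by
        intro u
        have : Finset.univ.filter (fun v : V => G.Adj v u) = G.neighborFinset u := by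
          ext v
          simp [SimpleGraph.mem_neighborFinset, SimpleGraph.adj_comm]
        rw [this]; exact hreg u
      rw [h2, Finset.sum_congr rfl (fun u _ => h3 u), Finset.sum_const,
        smul_eq_mul, mul_comm] at h1
      exact h1
    have hDcard : D.card = Fintype.card V / r := by
      rw [← hcount, Nat.mul_div_cancel_left _ hr]
    have hmem : Fintype.card V / r ∈
        {n | ∃ D : Finset V, D.card = n ∧ IsTotalDominatingSet G ↑D} := by
      refine ⟨D, hDcard, fun v => ?_⟩
      obtain ⟨u, hu, hfu⟩ := hf v c0
      exact ⟨u, by simp [hD, hfu], hu⟩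
    rw [totalDominationNumber]
    refine le_antisymm (Nat.sInf_le hmem) ?_
    have hne : {n | ∃ D : Finset V, D.card = n ∧ IsTotalDominatingSet G ↑D}.Nonempty :=
      ⟨_, hmem⟩
    obtain ⟨D', hD'card, hD'⟩ := Nat.sInf_mem hne
    -- lower bound : card V ≤ r * sInf
    have hsub : (Finset.univ : Finset V) ⊆ D'.biUnion (fun u => G.neighborFinset u) := by
      intro v _
      obtain ⟨u, hu, hadj⟩ := hD' v
      exact Finset.mem_biUnion.mpr ⟨u, hu, by simp [SimpleGraph.mem_neighborFinset,
        G.adj_comm, hadj]⟩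
    have hle : Fintype.card V ≤ r * D'.card := by
      calc Fintype.card V = (Finset.univ : Finset V).card := (Finset.card_univ).symm
        _ ≤ (D'.biUnion (fun u => G.neighborFinset u)).card := Finset.card_le_card hsub
        _ ≤ ∑ u ∈ D', (G.neighborFinset u).card := Finset.card_biUnion_le
        _ = r * D'.card := by simp [hreg _, Finset.sum_const, mul_comm]
    rw [← hcount] at hle
    rw [← hD'card, ← hDcard]
    exact le_of_mul_le_mul_left hle hr
end

section
/- For any two finite graphs G and H without isolated vertices, the domatic number of the Cartesian product satisfies d(G □ H) ≤ max{|V(G)|, |V(H)|}. -/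
open SimpleGraph Finset

/-!
Every color class of a domatic coloring of `G □ H` is a dominating set. A set `D` dominates
`G □ H` only if its projection to `V` or to `W` is onto: otherwise a vertex `(v, w)` with `v` and
`w` both missed is neither in `D` nor adjacent to it, since neighbours agree in one coordinate.
Hence every class has at least `min |V| |W|` elements, so `k · min |V| |W| ≤ |V| |W|`, i.e.
`k ≤ max |V| |W|`.
-/

section Domatic

variable {V : Type*} {G : SimpleGraph V}

lemma IsDomaticColoring.isDominatingSet_colorClass {k : ℕ} {f : V → Fin k}
    (hf : IsDomaticColoring G k f) (c : Fin k) : IsDominatingSet G {v | f v = c} := by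
  intro v
  obtain ⟨u, rfl | hvu, rfl⟩ := hf v c
  · exact Or.inl rfl
  · exact Or.inr ⟨u, rfl, hvu⟩

lemma IsDomaticColoring.mul_le_card [Fintype V] {k δ : ℕ} {f : V → Fin k}
    (hf : IsDomaticColoring G k f) (hδ : ∀ D : Finset V, IsDominatingSet G ↑D → δ ≤ #D) :
    k * δ ≤ Fintype.card V := by
  classical
  calc k * δ = ∑ _c : Fin k, δ := by simp
    _ ≤ ∑ c : Fin k, #{v | f v = c} :=
      sum_le_sum fun c _ => hδ _ (by simpa using hf.isDominatingSet_colorClass c)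
    _ = Fintype.card V := (card_eq_sum_card_fiberwise fun v _ => mem_univ (f v)).symm

lemma domaticNumber_le {B : ℕ} (h : ∀ k f, IsDomaticColoring G k f → k ≤ B) :
    domaticNumber G ≤ B :=
  csSup_le' fun k ⟨f, hf⟩ => h k f hf

/-- On an empty vertex type every `k` admits a domatic coloring; `sSup` of this unbounded set of
naturals is the junk value `0`. -/
lemma domaticNumber_of_isEmpty [IsEmpty V] : domaticNumber G = 0 :=
  Nat.sSup_of_not_bddAbove fun ⟨b, hb⟩ =>
    (hb ⟨isEmptyElim, isEmptyElim⟩ : b + 1 ≤ b).not_gt b.lt_succ_self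

end Domatic

lemma IsDominatingSet.min_card_le_card_of_boxProd {V W : Type*} [Fintype V] [Fintype W]
    {G : SimpleGraph V} {H : SimpleGraph W} {D : Finset (V × W)}
    (hD : IsDominatingSet (G □ H) ↑D) : min (Fintype.card V) (Fintype.card W) ≤ #D := by
  classical
  have hcover : ∀ v w, v ∈ D.image Prod.fst ∨ w ∈ D.image Prod.snd := by
    intro v w
    rcases hD (v, w) with hvw | ⟨u, hu, hadj⟩
    · exact Or.inl (mem_image_of_mem _ hvw)
    rcases boxProd_adj.1 hadj with ⟨-, hw⟩ | ⟨-, hv⟩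
    · exact Or.inr (mem_image.2 ⟨u, hu, hw.symm⟩)
    · exact Or.inl (mem_image.2 ⟨u, hu, hv.symm⟩)
  by_cases hfst : D.image Prod.fst = univ
  · calc min _ _ ≤ Fintype.card V := min_le_left _ _
      _ = #(D.image Prod.fst) := by rw [hfst, card_univ]
      _ ≤ #D := card_image_le
  · obtain ⟨v, hv⟩ := not_forall.1 fun h => hfst (eq_univ_of_forall h)
    have hsnd : D.image Prod.snd = univ :=
      eq_univ_of_forall fun w => (hcover v w).resolve_left hv
    calc min _ _ ≤ Fintype.card W := min_le_right _ _
      _ = #(D.image Prod.snd) := by rw [hsnd, card_univ]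
      _ ≤ #D := card_image_le

theorem domatic_boxProd_le_max_card_general {V W : Type*} [Fintype V] [Fintype W]
    (G : SimpleGraph V) (H : SimpleGraph W) :
    domaticNumber (G □ H) ≤ max (Fintype.card V) (Fintype.card W) := by
  cases isEmpty_or_nonempty (V × W) with
  | inl _ => simp [domaticNumber_of_isEmpty]
  | inr hne =>
    obtain ⟨v, w⟩ := hne.some
    have hmin_pos : 0 < min (Fintype.card V) (Fintype.card W) :=
      lt_min (Fintype.card_pos_iff.2 ⟨v⟩) (Fintype.card_pos_iff.2 ⟨w⟩)
    refine domaticNumber_le fun k f hf => le_of_mul_le_mul_right ?_ hmin_pos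
    calc k * min (Fintype.card V) (Fintype.card W) ≤ Fintype.card (V × W) :=
          hf.mul_le_card fun _ hD => hD.min_card_le_card_of_boxProd
      _ = max (Fintype.card V) (Fintype.card W) * min (Fintype.card V) (Fintype.card W) := by
          rw [Fintype.card_prod, ← min_mul_max, mul_comm]

theorem domatic_boxProd_le_max_card {V W : Type*} [Fintype V] [Fintype W]
    (G : SimpleGraph V) (H : SimpleGraph W) (hG : NoIsolated G) (hH : NoIsolated H) :
    domaticNumber (G □ H) ≤ max (Fintype.card V) (Fintype.card W) :=
  domatic_boxProd_le_max_card_general G H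
end

section
/- Let r ≥ 2 and s_0 ≤ s_1 ≤ … ≤ s_{r-1} be positive integers. If G is a graph with d_t(G) ≥ s_0 and H contains the complete multipartite graph K_{s_0,s_1,…,s_{r-1}} as a spanning subgraph, then d_t(G □ H) ≥ r·s_0. -/
open SimpleGraph Finset

/-!
Fix a total domatic colouring `f` of `G` with `s₀` colours and label each vertex `w` of `H` by its
part `p(w)` and its index `q(w)` in that part, reduced mod `s₀`. Colour `(v, w)` by
`(p(w), f(v) + q(w)) ∈ Fin r × Fin s₀`. Then `(v, w)` sees the colour `(i, c)`: if `i = p(w)`,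
through a `G`-neighbour `v'` of `v` with `f(v') = c - q(w)`; otherwise through the vertex of part
`i` with index `c - f(v)`, which exists because every part has at least `s₀` vertices.
-/

section

variable {V W : Type*} {G : SimpleGraph V} {H : SimpleGraph W}

namespace IsTotalDomaticColoring

theorem comp_surjective {k l : ℕ} {f : V → Fin k} (hf : IsTotalDomaticColoring G k f)
    {φ : Fin k → Fin l} (hφ : Function.Surjective φ) : IsTotalDomaticColoring G l (φ ∘ f) := by
  intro v c
  obtain ⟨c', rfl⟩ := hφ c
  obtain ⟨u, hvu, rfl⟩ := hf v c'
  exact ⟨u, hvu, rfl⟩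

theorem le_card [Fintype V] [Nonempty V] {k : ℕ} {f : V → Fin k}
    (hf : IsTotalDomaticColoring G k f) : k ≤ Fintype.card V := by
  have hsurj : Function.Surjective f := fun c => by
    obtain ⟨u, -, hu⟩ := hf (Classical.arbitrary V) c
    exact ⟨u, hu⟩
  simpa using Fintype.card_le_of_surjective f hsurj

theorem le_totalDomaticNumber [Fintype V] [Nonempty V] {k : ℕ} {f : V → Fin k}
    (hf : IsTotalDomaticColoring G k f) : k ≤ totalDomaticNumber G :=
  le_csSup ⟨Fintype.card V, fun _ ⟨_, hg⟩ => hg.le_card⟩ ⟨f, hf⟩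

theorem boxProd {r k : ℕ} [NeZero k] {f : V → Fin k} (hf : IsTotalDomaticColoring G k f)
    (g : W → Fin r × Fin k) (hg : ∀ w i c, i ≠ (g w).1 → ∃ w', H.Adj w w' ∧ g w' = (i, c)) :
    IsTotalDomaticColoring (G □ H) (r * k)
      fun p => finProdFinEquiv ((g p.2).1, f p.1 + (g p.2).2) := by
  rintro ⟨v, w⟩ d
  obtain ⟨⟨i, c⟩, rfl⟩ := finProdFinEquiv.surjective d
  by_cases hi : i = (g w).1
  · obtain ⟨v', hvv', hv'⟩ := hf v (c - (g w).2)
    refine ⟨(v', w), boxProd_adj.2 (Or.inl ⟨hvv', rfl⟩), ?_⟩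
    simp [hv', hi]
  · obtain ⟨w', hww', hw'⟩ := hg w i (c - f v) hi
    refine ⟨(v, w'), boxProd_adj.2 (Or.inr ⟨hww', rfl⟩), ?_⟩
    simp [hw']

end IsTotalDomaticColoring

-- On an empty vertex type every `k` admits a colouring, so the `sSup` is the junk value `0`.
theorem nonempty_of_totalDomaticNumber_pos (hG : 0 < totalDomaticNumber G) : Nonempty V := by
  by_contra hV
  rw [not_nonempty_iff] at hV
  have hunbdd : ¬BddAbove {k | ∃ f : V → Fin k, IsTotalDomaticColoring G k f} :=
    fun ⟨b, hb⟩ => (hb ⟨isEmptyElim, isEmptyElim⟩ : b + 1 ≤ b).not_gt b.lt_succ_self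
  exact hG.ne' (Nat.sSup_of_not_bddAbove hunbdd)

theorem exists_isTotalDomaticColoring_of_le {k : ℕ} [NeZero k] (hk : k ≤ totalDomaticNumber G) :
    ∃ f : V → Fin k, IsTotalDomaticColoring G k f := by
  set S := {k | ∃ f : V → Fin k, IsTotalDomaticColoring G k f}
  have hpos : 0 < sSup S := (NeZero.pos k).trans_le hk
  have hbdd : BddAbove S := by_contra fun h => hpos.ne' (Nat.sSup_of_not_bddAbove h)
  have hne : S.Nonempty := Set.nonempty_iff_ne_empty.2 fun h => by simp [h] at hpos
  obtain ⟨f, hf⟩ := Nat.sSup_mem hne hbdd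
  exact ⟨_, hf.comp_surjective (φ := fun c => Fin.ofNat k c)
    fun c => ⟨Fin.castLE hk c, Fin.ofNat_val_eq_self c⟩⟩

def multipartiteLabel {r : ℕ} {s : Fin r → ℕ} (k : ℕ) [NeZero k] (e : (Σ i, Fin (s i)) ≃ W)
    (w : W) : Fin r × Fin k :=
  ((e.symm w).1, Fin.ofNat k (e.symm w).2)

theorem exists_adj_multipartiteLabel_eq {r k : ℕ} [NeZero k] {s : Fin r → ℕ} (hk : ∀ i, k ≤ s i)
    (e : (Σ i, Fin (s i)) ≃ W)
    (hspan : ∀ a b, (completeMultipartiteGraph fun i => Fin (s i)).Adj a b → H.Adj (e a) (e b))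
    (w : W) (i : Fin r) (c : Fin k) (hi : i ≠ (multipartiteLabel k e w).1) :
    ∃ w', H.Adj w w' ∧ multipartiteLabel k e w' = (i, c) := by
  refine ⟨e ⟨i, Fin.castLE (hk i) c⟩, ?_, by
    rw [multipartiteLabel, Equiv.symm_apply_apply]; exact Prod.ext rfl (Fin.ofNat_val_eq_self c)⟩
  simpa using hspan (e.symm w) ⟨i, Fin.castLE (hk i) c⟩ (Ne.symm hi)

end

theorem totalDomatic_boxProd_multipartite {V W : Type*} [Fintype V] [Fintype W]
    (G : SimpleGraph V) (H : SimpleGraph W) (r : ℕ) (hr : 2 ≤ r)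
    (s : Fin r → ℕ) (hmono : Monotone s)
    (hdt : s ⟨0, by omega⟩ ≤ totalDomaticNumber G)
    (e : (Σ i : Fin r, Fin (s i)) ≃ W)
    (hspan : ∀ a b, (completeMultipartiteGraph (fun i : Fin r => Fin (s i))).Adj a b →
      H.Adj (e a) (e b)) :
    r * s ⟨0, by omega⟩ ≤ totalDomaticNumber (G □ H) := by
  set k := s ⟨0, by omega⟩
  rcases Nat.eq_zero_or_pos k with hk | hk
  · simp [hk]
  have : NeZero k := ⟨hk.ne'⟩
  have := nonempty_of_totalDomaticNumber_pos (hk.trans_le hdt)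
  have : Nonempty W := ⟨e ⟨⟨0, by omega⟩, ⟨0, hk⟩⟩⟩
  obtain ⟨f, hf⟩ := exists_isTotalDomaticColoring_of_le hdt
  have hk_le : ∀ i, k ≤ s i := fun i => hmono (Nat.zero_le i.val)
  exact (hf.boxProd _ (exists_adj_multipartiteLabel_eq hk_le e hspan)).le_totalDomaticNumber
end

section
/- For integers m > n ≥ 3, the total domatic number of C_m □ K_n equals n. -/
open SimpleGraph Finset

/-!
Colouring `(i, j)` by `j` is a total domatic `n`-colouring: `(i, j)` sees colour `j` at a cycle
neighbour `(i ± 1, j)` and every other colour in its own copy of `K_n`. Conversely every vertex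
has degree `n + 1`, so an `(n + 1)`-colouring is injective on every open neighbourhood. As
`n ≥ 3`, two vertices of a copy of `K_n` have a common neighbour there, so each copy gets `n`
distinct colours and misses one colour `c`. Each `(i, j)` must then see `c` at `(i ± 1, j)`, and
for three values of `j` this puts `c` twice into one of the two neighbouring copies.
-/

section

variable {V W : Type*} {G : SimpleGraph V} {k : ℕ}

theorem isDomaticColoring_top_of_surjective {f : W → Fin k} (hf : Function.Surjective f) :
    IsDomaticColoring (⊤ : SimpleGraph W) k f := by
  intro v c
  obtain ⟨u, rfl⟩ := hf c
  exact ⟨u, (eq_or_ne u v).imp id fun h => h.symm, rfl⟩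

theorem SimpleGraph.IsRegularOfDegree.noIsolated [G.LocallyFinite] {d : ℕ}
    (hG : G.IsRegularOfDegree d) (hd : 0 < d) : NoIsolated G := fun v =>
  (G.degree_pos_iff_exists_adj v).1 (hG.degree_eq v ▸ hd)

theorem IsDomaticColoring.isTotalDomaticColoring_boxProd {H : SimpleGraph W} {c : W → Fin k}
    (hc : IsDomaticColoring H k c) (hG : NoIsolated G) :
    IsTotalDomaticColoring (G □ H) k (c ∘ Prod.snd) := by
  rintro ⟨v, w⟩ col
  obtain ⟨u, hu | hu, rfl⟩ := hc w col
  · obtain ⟨v', hv'⟩ := hG v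
    exact ⟨(v', u), boxProd_adj.2 (Or.inl ⟨hv', hu.symm⟩), rfl⟩
  · exact ⟨(v, u), boxProd_adj.2 (Or.inr ⟨hu, rfl⟩), rfl⟩

theorem IsTotalDomaticColoring.image_neighborFinset_eq_univ [G.LocallyFinite] {f : V → Fin k}
    (hf : IsTotalDomaticColoring G k f) (v : V) : (G.neighborFinset v).image f = univ := by
  refine eq_univ_of_forall fun c => ?_
  obtain ⟨u, hu, rfl⟩ := hf v c
  exact mem_image_of_mem f ((G.mem_neighborFinset v u).2 hu)

/-- With no more than `k` neighbours, a vertex must see each of the `k` colours exactly once. -/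
theorem IsTotalDomaticColoring.isInjectiveColoring [G.LocallyFinite] {f : V → Fin k}
    (hf : IsTotalDomaticColoring G k f) (hdeg : ∀ v, G.degree v ≤ k) :
    IsInjectiveColoring G k f := by
  intro u w v hu hw hne hfuw
  have hcard : ((G.neighborFinset v).image f).card = (G.neighborFinset v).card := by
    refine le_antisymm card_image_le ?_
    rw [hf.image_neighborFinset_eq_univ v, card_univ, Fintype.card_fin]
    exact hdeg v
  exact hne (injOn_of_card_image_eq hcard ((G.mem_neighborFinset v u).2 hu)
    ((G.mem_neighborFinset v w).2 hw) hfuw)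

theorem IsInjectiveColoring.injective_column [Fintype W] {f : V × W → Fin k}
    (hf : IsInjectiveColoring (G □ (⊤ : SimpleGraph W)) k f) (hW : 3 ≤ Fintype.card W)
    (i : V) :
    Function.Injective fun j => f (i, j) := by
  classical
  intro j j' hjj'
  by_contra hne
  obtain ⟨j'', -, hj''⟩ : ∃ j'' ∈ univ, j'' ∉ ({j, j'} : Finset W) :=
    exists_mem_notMem_of_card_lt_card (card_le_two.trans_lt (by rw [card_univ]; omega))
  simp only [mem_insert, mem_singleton, not_or] at hj''
  exact hf (i, j) (i, j') (i, j'') (boxProd_adj.2 (Or.inr ⟨hj''.1, rfl⟩))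
    (boxProd_adj.2 (Or.inr ⟨hj''.2, rfl⟩)) (by simpa using hne) hjj'

/-- The colour `c` missing from column `i` must be found, for each `j`, at some `(i', j)` with
`i'` a `G`-neighbour of `i`; injectivity of the columns makes `j ↦ i'` injective. -/
theorem IsTotalDomaticColoring.card_le_degree_of_forall_ne [Fintype W] [G.LocallyFinite]
    {f : V × W → Fin k} (hf : IsTotalDomaticColoring (G □ (⊤ : SimpleGraph W)) k f)
    (hcol : ∀ i, Function.Injective fun j => f (i, j)) {i : V} {c : Fin k}
    (hc : ∀ j, f (i, j) ≠ c) : Fintype.card W ≤ G.degree i := by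
  have hnbr : ∀ j, ∃ i', G.Adj i i' ∧ f (i', j) = c := by
    intro j
    obtain ⟨⟨i', j'⟩, hadj, hfc⟩ := hf (i, j) c
    rcases boxProd_adj.1 hadj with ⟨hii', rfl⟩ | ⟨-, rfl⟩
    · exact ⟨i', hii', hfc⟩
    · exact absurd hfc (hc j')
  choose g hg hgc using hnbr
  rw [← card_neighborSet_eq_degree]
  refine Fintype.card_le_of_injective (fun j => ⟨g j, hg j⟩) fun j j' hjj' => ?_
  have hgj : g j = g j' := congrArg Subtype.val hjj'
  exact hcol (g j) ((hgc j).trans (hgj ▸ hgc j').symm)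

theorem IsTotalDomaticColoring.le_add_card_sub_two [Fintype W] [DecidableEq W] [Nonempty V]
    [G.LocallyFinite] {d : ℕ} (hG : G.IsRegularOfDegree d) (hd : 2 ≤ d)
    (hdW : d < Fintype.card W) {f : V × W → Fin k}
    (hf : IsTotalDomaticColoring (G □ (⊤ : SimpleGraph W)) k f) :
    k ≤ d + Fintype.card W - 2 := by
  by_contra! hk
  have hdeg : ∀ x, (G □ (⊤ : SimpleGraph W)).degree x ≤ k := fun x => by
    rw [degree_boxProd, hG.degree_eq, IsRegularOfDegree.top.degree_eq]
    omega
  have hcol := (hf.isInjectiveColoring hdeg).injective_column (by omega)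
  obtain ⟨i⟩ := ‹Nonempty V›
  obtain ⟨c, hc⟩ : ∃ c, ∀ j, f (i, j) ≠ c := by
    by_contra! hsurj
    have := Fintype.card_le_of_surjective _ hsurj
    rw [Fintype.card_fin] at this
    omega
  have := hf.card_le_degree_of_forall_ne hcol hc
  rw [hG.degree_eq] at this
  omega

end

theorem totalDomatic_cycle_boxProd_complete (m n : ℕ) (h3 : 3 ≤ n) (hmn : n < m) :
    totalDomaticNumber (SimpleGraph.cycleGraph m □ (⊤ : SimpleGraph (Fin n))) = n := by
  obtain ⟨m, rfl⟩ : ∃ m', m = m' + 3 := ⟨m - 3, by omega⟩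
  have hC : (cycleGraph (m + 3)).IsRegularOfDegree 2 := fun _ => cycleGraph_degree_three_le
  refine IsGreatest.csSup_eq ⟨⟨Prod.snd, ?_⟩, ?_⟩
  · exact (isDomaticColoring_top_of_surjective Function.surjective_id)
      |>.isTotalDomaticColoring_boxProd (hC.noIsolated two_pos)
  · rintro k ⟨f, hf⟩
    simpa using hf.le_add_card_sub_two hC le_rfl (by rw [Fintype.card_fin]; omega)
end

section
/- For any graph G without isolated vertices, d(G) ≤ d_t(G □ K_2) ≤ 2·d_t(G) + 1 ≤ 2·d(G) + 1, and moreover d(G □ K_2) ≤ 2·d(G) + 1. -/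
open SimpleGraph Finset

section Aux

set_option linter.unusedSectionVars false

variable {W : Type*} [Fintype W]

lemma aux_bdd_dom [Nonempty W] (H : SimpleGraph W) :
    BddAbove {k | ∃ f : W → Fin k, IsDomaticColoring H k f} := by
  refine ⟨Fintype.card W, fun k hk => ?_⟩
  obtain ⟨f, hf⟩ := hk
  have hsurj : Function.Surjective f := fun c => by
    obtain ⟨u, _, hu⟩ := hf (Classical.arbitrary W) c
    exact ⟨u, hu⟩
  simpa using Fintype.card_le_of_surjective f hsurj

lemma aux_bdd_tot [Nonempty W] (H : SimpleGraph W) :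
    BddAbove {k | ∃ f : W → Fin k, IsTotalDomaticColoring H k f} := by
  refine ⟨Fintype.card W, fun k hk => ?_⟩
  obtain ⟨f, hf⟩ := hk
  have hsurj : Function.Surjective f := fun c => by
    obtain ⟨u, _, hu⟩ := hf (Classical.arbitrary W) c
    exact ⟨u, hu⟩
  simpa using Fintype.card_le_of_surjective f hsurj

lemma aux_tot_subset_dom (H : SimpleGraph W) :
    {k | ∃ f : W → Fin k, IsTotalDomaticColoring H k f} ⊆
      {k | ∃ f : W → Fin k, IsDomaticColoring H k f} := by
  rintro k ⟨f, hf⟩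
  exact ⟨f, fun v c => by obtain ⟨u, hu, hc⟩ := hf v c; exact ⟨u, Or.inr hu, hc⟩⟩

lemma aux_one_mem_tot (H : SimpleGraph W) (hH : NoIsolated H) :
    1 ∈ {k | ∃ f : W → Fin k, IsTotalDomaticColoring H k f} := by
  refine ⟨fun _ => 0, fun v c => ?_⟩
  obtain ⟨u, hu⟩ := hH v
  exact ⟨u, hu, Subsingleton.elim _ _⟩

lemma aux_noiso_box {V : Type*} (G : SimpleGraph V) :
    NoIsolated (G □ (⊤ : SimpleGraph (Fin 2))) := by
  intro p
  refine ⟨(p.1, p.2 + 1), ?_⟩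
  rw [SimpleGraph.boxProd_adj]
  exact Or.inr ⟨by simp [Fin.ext_iff], rfl⟩

/-- Colors missing from copy-0 neighborhoods in a total domatic coloring of `G □ K₂`. -/
lemma aux_tot_missing {V : Type*} (G : SimpleGraph V) {k : ℕ}
    {F : V × Fin 2 → Fin k}
    (hF : IsTotalDomaticColoring (G □ (⊤ : SimpleGraph (Fin 2))) k F)
    (v : V) (c : Fin k) (hc : c ≠ F (v, 1)) :
    ∃ u, G.Adj v u ∧ F (u, 0) = c := by
  obtain ⟨⟨u, i⟩, hadj, hFc⟩ := hF (v, 0) c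
  rw [SimpleGraph.boxProd_adj] at hadj
  rcases hadj with ⟨hGadj, hi⟩ | ⟨htop, hvu⟩
  · refine ⟨u, hGadj, ?_⟩
    have h0 : (0 : Fin 2) = i := hi
    rw [← h0] at hFc
    exact hFc
  · exfalso
    apply hc
    have hi1 : i = 1 := by fin_cases i <;> simp_all
    have hvu' : v = u := hvu
    subst hvu'
    rw [hi1] at hFc
    exact hFc.symm

/-- Colors missing from copy-0 closed neighborhoods in a domatic coloring of `G □ K₂`. -/
lemma aux_dom_missing {V : Type*} (G : SimpleGraph V) {k : ℕ}
    {F : V × Fin 2 → Fin k}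
    (hF : IsDomaticColoring (G □ (⊤ : SimpleGraph (Fin 2))) k F)
    (v : V) (c : Fin k) (hc0 : c ≠ F (v, 0)) (hc : c ≠ F (v, 1)) :
    ∃ u, G.Adj v u ∧ F (u, 0) = c := by
  obtain ⟨⟨u, i⟩, heq | hadj, hFc⟩ := hF (v, 0) c
  · exact absurd (heq ▸ hFc).symm hc0
  · rw [SimpleGraph.boxProd_adj] at hadj
    rcases hadj with ⟨hGadj, hi⟩ | ⟨htop, hvu⟩
    · refine ⟨u, hGadj, ?_⟩
      have h0 : (0 : Fin 2) = i := hi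
      rw [← h0] at hFc
      exact hFc
    · exfalso
      apply hc
      have hi1 : i = 1 := by fin_cases i <;> simp_all
      have hvu' : v = u := hvu
      subst hvu'
      rw [hi1] at hFc
      exact hFc.symm

/-- The pairing map collapsing `Fin k` onto `Fin (k/2)`, sending both `2*j` and
`2*j+1` to `j` (with overflow clipped to the last class). -/
def aux_cls {k : ℕ} (hk : 2 ≤ k) (c : Fin k) : Fin (k / 2) :=
  ⟨min (c.1 / 2) (k / 2 - 1), by omega⟩

lemma aux_cls_pair {k : ℕ} (hk : 2 ≤ k) (j : Fin (k / 2)) :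
    ∃ a b : Fin k, a ≠ b ∧ aux_cls hk a = j ∧ aux_cls hk b = j := by
  have hj := j.2
  refine ⟨⟨2 * j.1, by omega⟩, ⟨2 * j.1 + 1, by omega⟩, ?_, ?_, ?_⟩
  · simp [Fin.ext_iff]
  · simp only [aux_cls, Fin.ext_iff]
    omega
  · simp only [aux_cls, Fin.ext_iff]
    omega

lemma aux_key_tot {V : Type*} [Fintype V] [Nonempty V] (G : SimpleGraph V)
    {k : ℕ} (hk : 2 ≤ k) {F : V × Fin 2 → Fin k}
    (hF : IsTotalDomaticColoring (G □ (⊤ : SimpleGraph (Fin 2))) k F) :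
    ∃ f : V → Fin (k / 2), IsTotalDomaticColoring G (k / 2) f := by
  refine ⟨fun u => aux_cls hk (F (u, 0)), fun v j => ?_⟩
  obtain ⟨a, b, hab, ha, hb⟩ := aux_cls_pair hk j
  by_cases h1 : a = F (v, 1)
  · obtain ⟨u, hu, hub⟩ := aux_tot_missing G hF v b (h1 ▸ hab.symm)
    exact ⟨u, hu, by show aux_cls hk (F (u, 0)) = j; rw [hub]; exact hb⟩
  · obtain ⟨u, hu, hua⟩ := aux_tot_missing G hF v a h1
    exact ⟨u, hu, by show aux_cls hk (F (u, 0)) = j; rw [hua]; exact ha⟩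

lemma aux_key_dom {V : Type*} [Fintype V] [Nonempty V] (G : SimpleGraph V)
    {k : ℕ} (hk : 2 ≤ k) {F : V × Fin 2 → Fin k}
    (hF : IsDomaticColoring (G □ (⊤ : SimpleGraph (Fin 2))) k F) :
    ∃ f : V → Fin (k / 2), IsDomaticColoring G (k / 2) f := by
  refine ⟨fun u => aux_cls hk (F (u, 0)), fun v j => ?_⟩
  obtain ⟨a, b, hab, ha, hb⟩ := aux_cls_pair hk j
  by_cases h0a : a = F (v, 0)
  · exact ⟨v, Or.inl rfl, by show aux_cls hk (F (v, 0)) = j; rw [← h0a]; exact ha⟩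
  by_cases h0b : b = F (v, 0)
  · exact ⟨v, Or.inl rfl, by show aux_cls hk (F (v, 0)) = j; rw [← h0b]; exact hb⟩
  by_cases h1 : a = F (v, 1)
  · obtain ⟨u, hu, hub⟩ := aux_dom_missing G hF v b h0b (h1 ▸ hab.symm)
    exact ⟨u, Or.inr hu, by show aux_cls hk (F (u, 0)) = j; rw [hub]; exact hb⟩
  · obtain ⟨u, hu, hua⟩ := aux_dom_missing G hF v a h0a h1
    exact ⟨u, Or.inr hu, by show aux_cls hk (F (u, 0)) = j; rw [hua]; exact ha⟩

end Aux

theorem domatic_boxProd_K2 {V : Type*} [Fintype V] (G : SimpleGraph V)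
    (hG : NoIsolated G) :
    domaticNumber G ≤ totalDomaticNumber (G □ (⊤ : SimpleGraph (Fin 2))) ∧
    totalDomaticNumber (G □ (⊤ : SimpleGraph (Fin 2))) ≤ 2 * totalDomaticNumber G + 1 ∧
    2 * totalDomaticNumber G + 1 ≤ 2 * domaticNumber G + 1 ∧
    domaticNumber (G □ (⊤ : SimpleGraph (Fin 2))) ≤ 2 * domaticNumber G + 1 := by
  cases isEmpty_or_nonempty V with
  | inl hE =>
    have e1 : {k | ∃ f : V → Fin k, IsDomaticColoring G k f} = Set.univ := by
      ext k
      simp only [Set.mem_setOf_eq, Set.mem_univ, iff_true]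
      exact ⟨fun v => isEmptyElim v, fun v => isEmptyElim v⟩
    have e2 : {k | ∃ f : V → Fin k, IsTotalDomaticColoring G k f} = Set.univ := by
      ext k
      simp only [Set.mem_setOf_eq, Set.mem_univ, iff_true]
      exact ⟨fun v => isEmptyElim v, fun v => isEmptyElim v⟩
    have e3 : {k | ∃ f : V × Fin 2 → Fin k,
        IsDomaticColoring (G □ (⊤ : SimpleGraph (Fin 2))) k f} = Set.univ := by
      ext k
      simp only [Set.mem_setOf_eq, Set.mem_univ, iff_true]
      exact ⟨fun v => isEmptyElim v, fun v => isEmptyElim v⟩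
    have e4 : {k | ∃ f : V × Fin 2 → Fin k,
        IsTotalDomaticColoring (G □ (⊤ : SimpleGraph (Fin 2))) k f} = Set.univ := by
      ext k
      simp only [Set.mem_setOf_eq, Set.mem_univ, iff_true]
      exact ⟨fun v => isEmptyElim v, fun v => isEmptyElim v⟩
    rw [domaticNumber, domaticNumber, totalDomaticNumber, totalDomaticNumber, e1, e2, e3, e4]
    refine ⟨le_rfl, by omega, le_rfl, by omega⟩
  | inr hNe =>
    have hsub1 : {k | ∃ f : V → Fin k, IsDomaticColoring G k f} ⊆
        {k | ∃ f : V × Fin 2 → Fin k,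
          IsTotalDomaticColoring (G □ (⊤ : SimpleGraph (Fin 2))) k f} := by
      rintro k ⟨f, hf⟩
      refine ⟨fun p => f p.1, fun p c => ?_⟩
      obtain ⟨u, hu | hu, hc⟩ := hf p.1 c
      · refine ⟨(p.1, p.2 + 1), ?_, by simpa [← hu]⟩
        rw [SimpleGraph.boxProd_adj]
        exact Or.inr ⟨by simp [Fin.ext_iff], rfl⟩
      · refine ⟨(u, p.2), ?_, hc⟩
        rw [SimpleGraph.boxProd_adj]
        exact Or.inl ⟨hu, rfl⟩
    have h1mem : (1 : ℕ) ∈ {k | ∃ f : V → Fin k, IsDomaticColoring G k f} :=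
      aux_tot_subset_dom G (aux_one_mem_tot G hG)
    have hboxtot1 := aux_one_mem_tot (G □ (⊤ : SimpleGraph (Fin 2))) (aux_noiso_box G)
    refine ⟨csSup_le_csSup (aux_bdd_tot _) ⟨1, h1mem⟩ hsub1, ?_, ?_, ?_⟩
    · refine csSup_le ⟨1, hboxtot1⟩ (fun k hk => ?_)
      obtain ⟨F, hF⟩ := hk
      rcases le_or_gt k 1 with hk1 | hk1
      · omega
      · have hmem := aux_key_tot G (by omega) hF
        have hle : k / 2 ≤ totalDomaticNumber G := le_csSup (aux_bdd_tot G) hmem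
        omega
    · have : totalDomaticNumber G ≤ domaticNumber G :=
        csSup_le_csSup (aux_bdd_dom G) ⟨1, aux_one_mem_tot G hG⟩ (aux_tot_subset_dom G)
      omega
    · refine csSup_le ⟨1, aux_tot_subset_dom _ hboxtot1⟩ (fun k hk => ?_)
      obtain ⟨F, hF⟩ := hk
      rcases le_or_gt k 1 with hk1 | hk1
      · omega
      · have hmem := aux_key_dom G (by omega) hF
        have hle : k / 2 ≤ domaticNumber G := le_csSup (aux_bdd_dom G) hmem
        omega
end

section
/- For any graph G and any bipartite graph H, both without isolated vertices: d_t(G □ H) ≥ 2·min{d_t(G), d_t(H)} and d(G □ H) ≥ 2·min{d(G), d_t(H)}. -/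
open SimpleGraph Finset

section Aux

variable {V W : Type*}

lemma tdc_le_card [Fintype V] [Nonempty V] (G : SimpleGraph V) {k : ℕ} (f : V → Fin k)
    (hf : IsTotalDomaticColoring G k f) : k ≤ Fintype.card V := by
  have hsurj : Function.Surjective f := fun c => by
    obtain ⟨u, _, hu⟩ := hf (Classical.arbitrary V) c
    exact ⟨u, hu⟩
  simpa using Fintype.card_le_of_surjective f hsurj

lemma dc_le_card [Fintype V] [Nonempty V] (G : SimpleGraph V) {k : ℕ} (f : V → Fin k)
    (hf : IsDomaticColoring G k f) : k ≤ Fintype.card V := by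
  have hsurj : Function.Surjective f := fun c => by
    obtain ⟨u, _, hu⟩ := hf (Classical.arbitrary V) c
    exact ⟨u, hu⟩
  simpa using Fintype.card_le_of_surjective f hsurj

lemma exists_tdc_of_le (G : SimpleGraph V) {k k' : ℕ} (h : k' ≤ k) (hk' : 0 < k')
    {f : V → Fin k} (hf : IsTotalDomaticColoring G k f) :
    ∃ g : V → Fin k', IsTotalDomaticColoring G k' g := by
  refine ⟨fun v => ⟨(f v).val % k', Nat.mod_lt _ hk'⟩, fun v c => ?_⟩
  obtain ⟨u, hadj, hu⟩ := hf v ⟨c.val, lt_of_lt_of_le c.isLt h⟩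
  exact ⟨u, hadj, by simp [hu, Nat.mod_eq_of_lt c.isLt]⟩

lemma exists_dc_of_le (G : SimpleGraph V) {k k' : ℕ} (h : k' ≤ k) (hk' : 0 < k')
    {f : V → Fin k} (hf : IsDomaticColoring G k f) :
    ∃ g : V → Fin k', IsDomaticColoring G k' g := by
  refine ⟨fun v => ⟨(f v).val % k', Nat.mod_lt _ hk'⟩, fun v c => ?_⟩
  obtain ⟨u, hadj, hu⟩ := hf v ⟨c.val, lt_of_lt_of_le c.isLt h⟩
  exact ⟨u, hadj, by simp [hu, Nat.mod_eq_of_lt c.isLt]⟩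

lemma key_total (G : SimpleGraph V) (H : SimpleGraph W) {k : ℕ} (hk : 0 < k)
    (f : V → Fin k) (g : W → Fin k) (C : H.Coloring (Fin 2))
    (hf : IsTotalDomaticColoring G k f) (hg : IsTotalDomaticColoring H k g) :
    ∃ F : V × W → Fin (2 * k), IsTotalDomaticColoring (G □ H) (2 * k) F := by
  haveI : NeZero k := ⟨hk.ne'⟩
  refine ⟨fun p => finProdFinEquiv (C p.2, f p.1 + g p.2), fun p t => ?_⟩
  obtain ⟨v, w⟩ := p
  have ht : finProdFinEquiv ((finProdFinEquiv.symm t).1, (finProdFinEquiv.symm t).2) = t := by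
    simpa using finProdFinEquiv.apply_symm_apply t
  set ε := (finProdFinEquiv.symm t).1 with hε'
  set a := (finProdFinEquiv.symm t).2 with ha'
  by_cases hcw : ε = C w
  · obtain ⟨v', hadj, hfv'⟩ := hf v (a - g w)
    refine ⟨(v', w), (SimpleGraph.boxProd_adj).2 (Or.inl ⟨hadj, rfl⟩), ?_⟩
    show finProdFinEquiv (C w, f v' + g w) = t
    rw [hfv', sub_add_cancel, ← hcw, ht]
  · obtain ⟨w', hadj, hgw'⟩ := hg w (a - f v)
    have hcol : C w' = ε := by
      have h1 : (C w).val ≠ (C w').val := Fin.val_ne_of_ne (C.valid hadj)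
      have h2 : ε.val ≠ (C w).val := Fin.val_ne_of_ne hcw
      have := ε.isLt; have := (C w).isLt; have := (C w').isLt
      exact Fin.ext (by omega)
    refine ⟨(v, w'), (SimpleGraph.boxProd_adj).2 (Or.inr ⟨hadj, rfl⟩), ?_⟩
    show finProdFinEquiv (C w', f v + g w') = t
    rw [hgw', hcol, add_sub_cancel, ht]

lemma key_dom (G : SimpleGraph V) (H : SimpleGraph W) {k : ℕ} (hk : 0 < k)
    (f : V → Fin k) (g : W → Fin k) (C : H.Coloring (Fin 2))
    (hf : IsDomaticColoring G k f) (hg : IsTotalDomaticColoring H k g) :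
    ∃ F : V × W → Fin (2 * k), IsDomaticColoring (G □ H) (2 * k) F := by
  haveI : NeZero k := ⟨hk.ne'⟩
  refine ⟨fun p => finProdFinEquiv (C p.2, f p.1 + g p.2), fun p t => ?_⟩
  obtain ⟨v, w⟩ := p
  have ht : finProdFinEquiv ((finProdFinEquiv.symm t).1, (finProdFinEquiv.symm t).2) = t := by
    simpa using finProdFinEquiv.apply_symm_apply t
  set ε := (finProdFinEquiv.symm t).1 with hε'
  set a := (finProdFinEquiv.symm t).2 with ha'
  by_cases hcw : ε = C w
  · obtain ⟨v', hv', hfv'⟩ := hf v (a - g w)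
    refine ⟨(v', w), ?_, ?_⟩
    · rcases hv' with h | h
      · exact Or.inl (by rw [h])
      · exact Or.inr ((SimpleGraph.boxProd_adj).2 (Or.inl ⟨h, rfl⟩))
    · show finProdFinEquiv (C w, f v' + g w) = t
      rw [hfv', sub_add_cancel, ← hcw, ht]
  · obtain ⟨w', hadj, hgw'⟩ := hg w (a - f v)
    have hcol : C w' = ε := by
      have h1 : (C w).val ≠ (C w').val := Fin.val_ne_of_ne (C.valid hadj)
      have h2 : ε.val ≠ (C w).val := Fin.val_ne_of_ne hcw
      have := ε.isLt; have := (C w).isLt; have := (C w').isLt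
      exact Fin.ext (by omega)
    refine ⟨(v, w'), Or.inr ((SimpleGraph.boxProd_adj).2 (Or.inr ⟨hadj, rfl⟩)), ?_⟩
    show finProdFinEquiv (C w', f v + g w') = t
    rw [hgw', hcol, add_sub_cancel, ht]

lemma empty_sup_aux (X : Type*) (hX : IsEmpty X) (P : (k : ℕ) → (X → Fin k) → Prop)
    (hP : ∀ k, ∀ f : X → Fin k, P k f) : sSup {k | ∃ f : X → Fin k, P k f} = 0 := by
  have huniv : {k | ∃ f : X → Fin k, P k f} = Set.univ := by
    ext k
    simp only [Set.mem_setOf_eq, Set.mem_univ, iff_true]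
    exact ⟨fun x => hX.elim x, hP _ _⟩
  rw [huniv]
  have : ¬BddAbove (Set.univ : Set ℕ) := by
    rintro ⟨b, hb⟩
    have := hb (Set.mem_univ (b + 1))
    omega
  rw [csSup_of_not_bddAbove this, csSup_empty]
  rfl

lemma bdd_tdc [Fintype V] [Nonempty V] (G : SimpleGraph V) :
    BddAbove {k | ∃ f : V → Fin k, IsTotalDomaticColoring G k f} :=
  ⟨Fintype.card V, fun k hk => by obtain ⟨f, hf⟩ := hk; exact tdc_le_card G f hf⟩

lemma bdd_dc [Fintype V] [Nonempty V] (G : SimpleGraph V) :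
    BddAbove {k | ∃ f : V → Fin k, IsDomaticColoring G k f} :=
  ⟨Fintype.card V, fun k hk => by obtain ⟨f, hf⟩ := hk; exact dc_le_card G f hf⟩

end Aux

theorem domatic_boxProd_bipartite {V W : Type*} [Fintype V] [Fintype W]
    (G : SimpleGraph V) (H : SimpleGraph W)
    (hG : NoIsolated G) (hH : NoIsolated H) (hbip : H.Colorable 2) :
    2 * min (totalDomaticNumber G) (totalDomaticNumber H) ≤ totalDomaticNumber (G □ H) ∧
    2 * min (domaticNumber G) (totalDomaticNumber H) ≤ domaticNumber (G □ H) := by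
  classical
  by_cases hV : Nonempty V
  swap
  · haveI : IsEmpty V := not_nonempty_iff.mp hV
    have h1 : totalDomaticNumber G = 0 := by
      apply empty_sup_aux V ‹_›
      intro k f v; exact isEmptyElim v
    have h2 : domaticNumber G = 0 := by
      apply empty_sup_aux V ‹_›
      intro k f v; exact isEmptyElim v
    simp [h1, h2]
  by_cases hW : Nonempty W
  swap
  · haveI : IsEmpty W := not_nonempty_iff.mp hW
    have h1 : totalDomaticNumber H = 0 := by
      apply empty_sup_aux W ‹_›
      intro k f v; exact isEmptyElim v
    simp [h1]
  -- the main case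
  obtain ⟨C⟩ := hbip
  -- total domatic sets
  have memG : totalDomaticNumber G ∈ {k | ∃ f : V → Fin k, IsTotalDomaticColoring G k f} := by
    apply Nat.sSup_mem
    · exact ⟨1, fun v => 0, fun v c => by
        obtain ⟨u, hu⟩ := hG v
        exact ⟨u, hu, Subsingleton.elim _ _⟩⟩
    · exact bdd_tdc G
  have memH : totalDomaticNumber H ∈ {k | ∃ f : W → Fin k, IsTotalDomaticColoring H k f} := by
    apply Nat.sSup_mem
    · exact ⟨1, fun v => 0, fun v c => by
        obtain ⟨u, hu⟩ := hH v
        exact ⟨u, hu, Subsingleton.elim _ _⟩⟩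
    · exact bdd_tdc H
  have memG' : domaticNumber G ∈ {k | ∃ f : V → Fin k, IsDomaticColoring G k f} := by
    apply Nat.sSup_mem
    · exact ⟨1, fun v => 0, fun v c => ⟨v, Or.inl rfl, Subsingleton.elim _ _⟩⟩
    · exact bdd_dc G
  have hG1 : 1 ≤ totalDomaticNumber G := by
    apply le_csSup (bdd_tdc G)
    exact ⟨fun v => 0, fun v c => by
      obtain ⟨u, hu⟩ := hG v
      exact ⟨u, hu, Subsingleton.elim _ _⟩⟩
  have hH1 : 1 ≤ totalDomaticNumber H := by
    apply le_csSup (bdd_tdc H)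
    exact ⟨fun v => 0, fun v c => by
      obtain ⟨u, hu⟩ := hH v
      exact ⟨u, hu, Subsingleton.elim _ _⟩⟩
  have hG1' : 1 ≤ domaticNumber G := by
    apply le_csSup (bdd_dc G)
    exact ⟨fun v => 0, fun v c => ⟨v, Or.inl rfl, Subsingleton.elim _ _⟩⟩
  obtain ⟨fG, hfG⟩ := memG
  obtain ⟨gH, hgH⟩ := memH
  obtain ⟨fG', hfG'⟩ := memG'
  have bddP := bdd_tdc (G □ H)
  have bddP' := bdd_dc (G □ H)
  constructor
  · set k := min (totalDomaticNumber G) (totalDomaticNumber H) with hk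
    have hkpos : 0 < k := lt_min_iff.2 ⟨hG1, hH1⟩
    obtain ⟨f, hf⟩ := exists_tdc_of_le G (min_le_left _ _) hkpos hfG
    obtain ⟨g, hg⟩ := exists_tdc_of_le H (min_le_right _ _) hkpos hgH
    obtain ⟨F, hF⟩ := key_total G H hkpos f g C hf hg
    exact le_csSup bddP ⟨F, hF⟩
  · set k := min (domaticNumber G) (totalDomaticNumber H) with hk
    have hkpos : 0 < k := lt_min_iff.2 ⟨hG1', hH1⟩
    obtain ⟨f, hf⟩ := exists_dc_of_le G (min_le_left _ _) hkpos hfG'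
    obtain ⟨g, hg⟩ := exists_tdc_of_le H (min_le_right _ _) hkpos hgH
    obtain ⟨F, hF⟩ := key_dom G H hkpos f g C hf hg
    exact le_csSup bddP' ⟨F, hF⟩
end

section
/- For every positive integer k, the hypercube satisfies γ(Q_{2^k - 1}) = 2^{2^k - k - 1} and γ_t(Q_{2^k}) = 2^{2^k - k}, and moreover γ(Q_{2^k}) ≤ 2^{2^k - k} and γ_t(Q_{2^k + 1}) ≤ 2^{2^k - k + 1}. -/
open SimpleGraph Finset

/-! For `n + 1 = 2 ^ k`, the Hamming code (the kernel of a parity-check map `𝔽₂ⁿ → 𝔽₂ᵏ` whose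
columns are exactly the nonzero vectors) dominates `Q n`: a word with nonzero syndrome `s` is
adjacent to the codeword obtained by flipping the coordinate whose column is `s`. It has
`2 ^ (n - k)` elements, so its closed neighbourhoods meet the sphere-packing bound
`2 ^ n ≤ |D| (n + 1)`. Appending `t ≥ 1` coordinates with zero columns makes every syndrome,
zero included, a column, so the kernel in `𝔽₂^(n + t)` totally dominates `Q (n + t)` with
`2 ^ (n + t - k)` elements; for `t = 1` this meets the bound `2 ^ m ≤ |D| m`. -/

section Domination

variable {V : Type*} {G : SimpleGraph V}

lemma IsTotalDominatingSet.isDominatingSet {D : Set V} (hD : IsTotalDominatingSet G D) :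
    IsDominatingSet G D :=
  fun v => Or.inr (hD v)

variable [Fintype V]

lemma dominationNumber_le {D : Finset V} (hD : IsDominatingSet G D) :
    dominationNumber G ≤ #D :=
  Nat.sInf_le ⟨D, rfl, hD⟩

lemma totalDominationNumber_le {D : Finset V} (hD : IsTotalDominatingSet G D) :
    totalDominationNumber G ≤ #D :=
  Nat.sInf_le ⟨D, rfl, hD⟩

lemma dominationNumber_eq_card {D : Finset V} (hD : IsDominatingSet G D)
    (hmin : ∀ D' : Finset V, IsDominatingSet G D' → #D ≤ #D') :
    dominationNumber G = #D :=
  (dominationNumber_le hD).antisymm <| le_csInf ⟨_, D, rfl, hD⟩ <| by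
    rintro _ ⟨D', rfl, hD'⟩
    exact hmin D' hD'

lemma totalDominationNumber_eq_card {D : Finset V} (hD : IsTotalDominatingSet G D)
    (hmin : ∀ D' : Finset V, IsTotalDominatingSet G D' → #D ≤ #D') :
    totalDominationNumber G = #D :=
  (totalDominationNumber_le hD).antisymm <| le_csInf ⟨_, D, rfl, hD⟩ <| by
    rintro _ ⟨D', rfl, hD'⟩
    exact hmin D' hD'

variable [DecidableRel G.Adj]

lemma IsDominatingSet.card_le_mul {D : Finset V} (hD : IsDominatingSet G D) :
    Fintype.card V ≤ #D * (G.maxDegree + 1) := by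
  classical
  have hcover : (univ : Finset V) ⊆ D.biUnion fun d => insert d (G.neighborFinset d) := by
    intro v _
    rcases hD v with hv | ⟨u, hu, hvu⟩
    · exact mem_biUnion.2 ⟨v, hv, mem_insert_self _ _⟩
    · exact mem_biUnion.2 ⟨u, hu, mem_insert_of_mem ((G.mem_neighborFinset _ _).2 hvu.symm)⟩
  calc Fintype.card V ≤ #(D.biUnion fun d => insert d (G.neighborFinset d)) :=
        card_le_card hcover
    _ ≤ ∑ d ∈ D, #(insert d (G.neighborFinset d)) := card_biUnion_le
    _ ≤ ∑ _d ∈ D, (G.maxDegree + 1) := sum_le_sum fun d _ =>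
        (card_insert_le _ _).trans (Nat.succ_le_succ (G.degree_le_maxDegree d))
    _ = #D * (G.maxDegree + 1) := by rw [sum_const, smul_eq_mul]

lemma IsTotalDominatingSet.card_le_mul {D : Finset V} (hD : IsTotalDominatingSet G D) :
    Fintype.card V ≤ #D * G.maxDegree := by
  classical
  have hcover : (univ : Finset V) ⊆ D.biUnion fun d => G.neighborFinset d := by
    intro v _
    obtain ⟨u, hu, hvu⟩ := hD v
    exact mem_biUnion.2 ⟨u, hu, (G.mem_neighborFinset _ _).2 hvu.symm⟩
  calc Fintype.card V ≤ #(D.biUnion fun d => G.neighborFinset d) := card_le_card hcover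
    _ ≤ ∑ d ∈ D, #(G.neighborFinset d) := card_biUnion_le
    _ ≤ ∑ _d ∈ D, G.maxDegree := sum_le_sum fun d _ => G.degree_le_maxDegree d
    _ = #D * G.maxDegree := by rw [sum_const, smul_eq_mul]

end Domination

section Hypercube

variable {m : ℕ}

-- `ZMod 2` is definitionally `Fin 2`, so the vertices of `hypercube m` are vectors over `𝔽₂`.
lemma hypercube_adj_iff {x y : Fin m → ZMod 2} :
    (hypercube m).Adj x y ↔ ∃ i, y = x + Pi.single i 1 := by
  have flip : ∀ a b : ZMod 2, a ≠ b ↔ b = a + 1 := by decide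
  change (fromRel (V := Fin m → ZMod 2) fun x y => ∃ i, x i ≠ y i ∧ ∀ j, j ≠ i → x j = y j).Adj x y
    ↔ _
  rw [fromRel_adj]
  constructor
  · rintro ⟨-, ⟨i, hi, hrest⟩ | ⟨i, hi, hrest⟩⟩ <;> refine ⟨i, funext fun j => ?_⟩ <;>
      rcases eq_or_ne j i with rfl | hj
    · simpa using (flip _ _).1 hi
    · rw [Pi.add_apply, Pi.single_eq_of_ne hj, add_zero]
      exact (hrest j hj).symm
    · simpa using (flip _ _).1 hi.symm
    · rw [Pi.add_apply, Pi.single_eq_of_ne hj, add_zero]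
      exact hrest j hj
  · rintro ⟨i, rfl⟩
    have hi : x i ≠ (x + Pi.single i 1 : Fin m → ZMod 2) i := (flip _ _).2 (by simp)
    refine ⟨fun h => hi (congrFun h i), Or.inl ⟨i, hi, fun j hj => ?_⟩⟩
    rw [Pi.add_apply, Pi.single_eq_of_ne hj, add_zero]

lemma hypercube_adj_add_single (x : Fin m → ZMod 2) (i : Fin m) :
    (hypercube m).Adj x (x + Pi.single i 1) :=
  hypercube_adj_iff.2 ⟨i, rfl⟩

lemma hypercube_maxDegree_le [DecidableRel (hypercube m).Adj] : (hypercube m).maxDegree ≤ m := by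
  classical
  refine maxDegree_le_of_forall_degree_le _ _ fun x => ?_
  have hsub : (hypercube m).neighborFinset x ⊆
      univ.image fun i => (x : Fin m → ZMod 2) + Pi.single i 1 := by
    intro y hy
    obtain ⟨i, rfl⟩ := hypercube_adj_iff.1 ((mem_neighborFinset _ _ _).1 hy)
    exact mem_image_of_mem _ (mem_univ i)
  calc (hypercube m).degree x ≤ #(univ.image fun i => (x : Fin m → ZMod 2) + Pi.single i 1) :=
        card_le_card hsub
    _ ≤ m := card_image_le.trans (by simp)

lemma two_pow_le_card_mul_of_isDominatingSet {D : Finset (Fin m → ZMod 2)}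
    (hD : IsDominatingSet (hypercube m) (D : Set (Fin m → ZMod 2))) : 2 ^ m ≤ #D * (m + 1) := by
  classical
  calc 2 ^ m = Fintype.card (Fin m → Fin 2) := by simp
    _ ≤ #D * ((hypercube m).maxDegree + 1) := hD.card_le_mul
    _ ≤ #D * (m + 1) := by gcongr; exact hypercube_maxDegree_le

lemma two_pow_le_card_mul_of_isTotalDominatingSet {D : Finset (Fin m → ZMod 2)}
    (hD : IsTotalDominatingSet (hypercube m) (D : Set (Fin m → ZMod 2))) : 2 ^ m ≤ #D * m := by
  classical
  calc 2 ^ m = Fintype.card (Fin m → Fin 2) := by simp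
    _ ≤ #D * (hypercube m).maxDegree := hD.card_le_mul
    _ ≤ #D * m := by gcongr; exact hypercube_maxDegree_le

end Hypercube

section KernelCode

variable {m : ℕ} {W : Type*} [AddCommGroup W] [Module (ZMod 2) W]
  (H : (Fin m → ZMod 2) →ₗ[ZMod 2] W)

lemma map_add_single_eq_zero_iff (x : Fin m → ZMod 2) (i : Fin m) :
    H (x + Pi.single i 1) = 0 ↔ H (Pi.single i 1) = H x := by
  have hneg : -x = x := funext fun j => ZMod.neg_eq_self_mod_two (x j)
  rw [map_add, add_eq_zero_iff_neg_eq, ← map_neg, hneg, eq_comm]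

lemma isDominatingSet_ker (hH : ∀ w ≠ 0, ∃ i, H (Pi.single i 1) = w) :
    IsDominatingSet (hypercube m) (LinearMap.ker H : Set (Fin m → ZMod 2)) := by
  intro x
  by_cases hx : H x = 0
  · exact Or.inl hx
  · obtain ⟨i, hi⟩ := hH _ hx
    exact Or.inr ⟨_, (map_add_single_eq_zero_iff H x i).2 hi, hypercube_adj_add_single x i⟩

lemma isTotalDominatingSet_ker (hH : ∀ w, ∃ i, H (Pi.single i 1) = w) :
    IsTotalDominatingSet (hypercube m) (LinearMap.ker H : Set (Fin m → ZMod 2)) := by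
  intro x
  obtain ⟨i, hi⟩ := hH (H x)
  exact ⟨_, (map_add_single_eq_zero_iff H x i).2 hi, hypercube_adj_add_single x i⟩

lemma surjective_of_forall_ne_zero_exists_single
    (hH : ∀ w ≠ 0, ∃ i, H (Pi.single i 1) = w) : Function.Surjective H := fun w => by
  rcases eq_or_ne w 0 with rfl | hw
  · exact ⟨0, map_zero H⟩
  · obtain ⟨i, hi⟩ := hH w hw
    exact ⟨_, hi⟩

lemma natCard_ker {k : ℕ} (H : (Fin m → ZMod 2) →ₗ[ZMod 2] (Fin k → ZMod 2))
    (hH : Function.Surjective H) : Nat.card (LinearMap.ker H) = 2 ^ (m - k) := by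
  have hrank := LinearMap.finrank_range_add_finrank_ker H
  rw [LinearMap.range_eq_top.2 hH, finrank_top, Module.finrank_fin_fun, Module.finrank_fin_fun]
    at hrank
  rw [Module.natCard_eq_pow_finrank (K := ZMod 2), Nat.card_zmod]
  congr 1
  omega

lemma exists_finset_coe_eq_ker {k : ℕ} (H : (Fin m → ZMod 2) →ₗ[ZMod 2] (Fin k → ZMod 2))
    (hH : Function.Surjective H) :
    ∃ D : Finset (Fin m → ZMod 2),
      (D : Set (Fin m → ZMod 2)) = LinearMap.ker H ∧ #D = 2 ^ (m - k) := by
  classical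
  exact ⟨_, Set.coe_toFinset _, by rw [← Nat.card_eq_card_toFinset]; exact natCard_ker H hH⟩

end KernelCode

section Hamming

variable {n k : ℕ}

lemma exists_hammingCheck (hn : n + 1 = 2 ^ k) :
    ∃ H : (Fin n → ZMod 2) →ₗ[ZMod 2] (Fin k → ZMod 2), ∀ w ≠ 0, ∃ i, H (Pi.single i 1) = w := by
  classical
  have hcard : Fintype.card {w : Fin k → ZMod 2 // w ≠ 0} = n := by
    simp only [ne_eq, Fintype.card_subtype_compl, Fintype.card_subtype_eq, Fintype.card_pi,
      ZMod.card, prod_const, card_univ, Fintype.card_fin]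
    omega
  let e := Fintype.equivFinOfCardEq hcard
  refine ⟨Fintype.linearCombination (ZMod 2) fun i => (e.symm i : Fin k → ZMod 2), fun w hw => ?_⟩
  exact ⟨e ⟨w, hw⟩, by simp⟩

lemma exists_comp_funLeft_castAdd_single_eq {W : Type*} [AddCommGroup W] [Module (ZMod 2) W]
    {H : (Fin n → ZMod 2) →ₗ[ZMod 2] W} (hH : ∀ w ≠ 0, ∃ i, H (Pi.single i 1) = w)
    {t : ℕ} (ht : 0 < t) (w : W) :
    ∃ i, (H ∘ₗ LinearMap.funLeft (ZMod 2) (ZMod 2) (Fin.castAdd t)) (Pi.single i 1) = w := by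
  rcases eq_or_ne w 0 with rfl | hw
  · refine ⟨Fin.natAdd n ⟨0, ht⟩, ?_⟩
    have hrestrict : LinearMap.funLeft (ZMod 2) (ZMod 2) (Fin.castAdd t)
        (Pi.single (Fin.natAdd n ⟨0, ht⟩) 1) = 0 := by
      ext j
      refine Pi.single_eq_of_ne (Fin.ne_of_val_ne ?_) _
      simp only [Fin.val_castAdd, Fin.val_natAdd]
      omega
    rw [LinearMap.comp_apply, hrestrict, map_zero]
  · obtain ⟨i, rfl⟩ := hH w hw
    refine ⟨Fin.castAdd t i, ?_⟩
    have hrestrict : LinearMap.funLeft (ZMod 2) (ZMod 2) (Fin.castAdd t)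
        (Pi.single (Fin.castAdd t i) 1) = Pi.single i 1 := by
      ext j
      simp [LinearMap.funLeft_apply, Pi.single_apply]
    rw [LinearMap.comp_apply, hrestrict]

lemma exists_perfect_dominatingSet_hypercube (hn : n + 1 = 2 ^ k) :
    ∃ D : Finset (Fin n → ZMod 2),
      IsDominatingSet (hypercube n) (D : Set (Fin n → ZMod 2)) ∧ #D = 2 ^ (n - k) := by
  obtain ⟨H, hH⟩ := exists_hammingCheck hn
  obtain ⟨D, hDH, hcard⟩ :=
    exists_finset_coe_eq_ker H (surjective_of_forall_ne_zero_exists_single H hH)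
  exact ⟨D, hDH ▸ isDominatingSet_ker H hH, hcard⟩

lemma exists_totalDominatingSet_hypercube_add (hn : n + 1 = 2 ^ k) {t : ℕ} (ht : 0 < t) :
    ∃ D : Finset (Fin (n + t) → ZMod 2),
      IsTotalDominatingSet (hypercube (n + t)) (D : Set (Fin (n + t) → ZMod 2)) ∧
        #D = 2 ^ (n + t - k) := by
  obtain ⟨H, hH⟩ := exists_hammingCheck hn
  have hcols := exists_comp_funLeft_castAdd_single_eq hH ht
  obtain ⟨D, hDH, hcard⟩ :=
    exists_finset_coe_eq_ker _ (surjective_of_forall_ne_zero_exists_single _ fun w _ => hcols w)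
  exact ⟨D, hDH ▸ isTotalDominatingSet_ker _ hcols, hcard⟩

lemma le_of_succ_eq_two_pow (hn : n + 1 = 2 ^ k) : k ≤ n := by
  have := k.lt_two_pow_self
  omega

lemma dominationNumber_hypercube_of_succ_eq (hn : n + 1 = 2 ^ k) :
    dominationNumber (hypercube n) = 2 ^ (n - k) := by
  obtain ⟨D, hD, hcard⟩ := exists_perfect_dominatingSet_hypercube hn
  have hperfect : #D * (n + 1) = 2 ^ n := by
    rw [hcard, hn, ← pow_add, Nat.sub_add_cancel (le_of_succ_eq_two_pow hn)]
  rw [← hcard]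
  refine dominationNumber_eq_card hD fun D' hD' => Nat.le_of_mul_le_mul_right ?_ n.succ_pos
  exact hperfect ▸ two_pow_le_card_mul_of_isDominatingSet hD'

lemma totalDominationNumber_hypercube_succ_of_succ_eq (hn : n + 1 = 2 ^ k) :
    totalDominationNumber (hypercube (n + 1)) = 2 ^ (n + 1 - k) := by
  obtain ⟨D, hD, hcard⟩ := exists_totalDominatingSet_hypercube_add hn one_pos
  have hperfect : #D * (n + 1) = 2 ^ (n + 1) := by
    rw [hcard, hn, ← pow_add, Nat.sub_add_cancel (by have := le_of_succ_eq_two_pow hn; omega)]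
  rw [← hcard]
  refine totalDominationNumber_eq_card hD fun D' hD' => Nat.le_of_mul_le_mul_right ?_ n.succ_pos
  exact hperfect ▸ two_pow_le_card_mul_of_isTotalDominatingSet hD'

lemma dominationNumber_hypercube_succ_le_of_succ_eq (hn : n + 1 = 2 ^ k) :
    dominationNumber (hypercube (n + 1)) ≤ 2 ^ (n + 1 - k) := by
  obtain ⟨D, hD, hcard⟩ := exists_totalDominatingSet_hypercube_add hn one_pos
  exact hcard ▸ dominationNumber_le hD.isDominatingSet

lemma totalDominationNumber_hypercube_add_two_le_of_succ_eq (hn : n + 1 = 2 ^ k) :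
    totalDominationNumber (hypercube (n + 2)) ≤ 2 ^ (n + 2 - k) := by
  obtain ⟨D, hD, hcard⟩ := exists_totalDominatingSet_hypercube_add hn two_pos
  exact hcard ▸ totalDominationNumber_le hD

end Hamming

theorem domination_hypercube_pow_two_general (k : ℕ) :
    dominationNumber (hypercube (2 ^ k - 1)) = 2 ^ (2 ^ k - k - 1) ∧
    totalDominationNumber (hypercube (2 ^ k)) = 2 ^ (2 ^ k - k) ∧
    dominationNumber (hypercube (2 ^ k)) ≤ 2 ^ (2 ^ k - k) ∧
    totalDominationNumber (hypercube (2 ^ k + 1)) ≤ 2 ^ (2 ^ k - k + 1) := by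
  obtain ⟨n, hn⟩ : ∃ n, n + 1 = 2 ^ k := ⟨2 ^ k - 1, Nat.sub_add_cancel Nat.one_le_two_pow⟩
  have hk := le_of_succ_eq_two_pow hn
  rw [← hn, Nat.add_sub_cancel, show n + 1 - k - 1 = n - k by omega,
    show n + 1 - k + 1 = n + 2 - k by omega]
  exact ⟨dominationNumber_hypercube_of_succ_eq hn,
    totalDominationNumber_hypercube_succ_of_succ_eq hn,
    dominationNumber_hypercube_succ_le_of_succ_eq hn,
    totalDominationNumber_hypercube_add_two_le_of_succ_eq hn⟩

theorem domination_hypercube_pow_two (k : ℕ) (hk : 0 < k) :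
    dominationNumber (hypercube (2 ^ k - 1)) = 2 ^ (2 ^ k - k - 1) ∧
    totalDominationNumber (hypercube (2 ^ k)) = 2 ^ (2 ^ k - k) ∧
    dominationNumber (hypercube (2 ^ k)) ≤ 2 ^ (2 ^ k - k) ∧
    totalDominationNumber (hypercube (2 ^ k + 1)) ≤ 2 ^ (2 ^ k - k + 1) :=
  domination_hypercube_pow_two_general k
end

section
/- Let d, k_1, …, k_d be positive integers with k_d ≡ 0 (mod 4) and k_i ≡ 0 (mod 2d) for all i < d. Then the d-dimensional torus C_{k_1} □ … □ C_{k_d} has total domatic number exactly 2d. Consequently its total domination number equals (k_1·k_2·⋯·k_d)/(2d). -/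
open SimpleGraph Finset

/-! Every vertex `x` of the torus has at most `2d` neighbours `x ± e_i`. Hence a total domatic
colouring has at most `2d` colours and a total dominating set has at least `|V| / 2d` vertices,
while the smallest class of a total domatic `2d`-colouring is a total dominating set with at most
`|V| / 2d` vertices. In the colouring `f(x) = ∑ w_i(x_i) ∈ ℤ/2d` a step along coordinate
`i < d - 1` changes `f` by `±(i + 1)`, and the two steps along the last coordinate change it by `0`
and `d`; together these reach every residue mod `2d`. -/

open Function

section TotalDomination

variable {V : Type*} [Fintype V] {G : SimpleGraph V}

theorem IsTotalDomaticColoring.isTotalDominatingSet_fiber {k : ℕ} {f : V → Fin k}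
    (hf : IsTotalDomaticColoring G k f) (c : Fin k) :
    IsTotalDominatingSet G ↑({v | f v = c} : Finset V) := fun v => by
  obtain ⟨u, hadj, hu⟩ := hf v c
  exact ⟨u, by simpa using hu, hadj⟩

variable [DecidableRel G.Adj]

theorem IsTotalDomaticColoring.le_degree {k : ℕ} {f : V → Fin k}
    (hf : IsTotalDomaticColoring G k f) (v : V) : k ≤ G.degree v := by
  choose u hadj hu using hf v
  rw [← card_neighborFinset_eq_degree, ← Fintype.card_fin k, ← card_univ]
  exact card_le_card_of_injOn u (fun c _ => (mem_neighborFinset G v _).2 (hadj c))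
    (fun a _ b _ hab => by rw [← hu a, ← hu b, hab])

theorem IsTotalDominatingSet.card_le_card_mul {D : Finset V} (hD : IsTotalDominatingSet G D)
    {r : ℕ} (hdeg : ∀ v, G.degree v ≤ r) : Fintype.card V ≤ #D * r := by
  classical
  have hcover : univ ⊆ D.biUnion fun u => G.neighborFinset u := fun v _ => by
    obtain ⟨u, hu, hadj⟩ := hD v
    exact mem_biUnion.2 ⟨u, hu, (mem_neighborFinset G u v).2 hadj.symm⟩
  calc Fintype.card V ≤ #(D.biUnion fun u => G.neighborFinset u) :=
        card_univ (α := V) ▸ card_le_card hcover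
    _ ≤ ∑ u ∈ D, #(G.neighborFinset u) := card_biUnion_le
    _ ≤ #D * r := by
      simpa only [card_neighborFinset_eq_degree, smul_eq_mul]
        using sum_le_card_nsmul D _ r fun u _ => hdeg u

theorem totalDomaticNumber_eq_of_degree_le {r : ℕ} {f : V → Fin r}
    (hf : IsTotalDomaticColoring G r f) {v : V} (hv : G.degree v ≤ r) :
    totalDomaticNumber G = r := by
  have hbdd : ∀ k ∈ {k | ∃ g : V → Fin k, IsTotalDomaticColoring G k g}, k ≤ r := by
    rintro k ⟨g, hg⟩
    exact (hg.le_degree v).trans hv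
  exact le_antisymm (csSup_le ⟨r, f, hf⟩ hbdd) (le_csSup ⟨r, hbdd⟩ ⟨f, hf⟩)

theorem totalDominationNumber_eq_of_degree_le {r : ℕ} (hr : 0 < r)
    (hdeg : ∀ v, G.degree v ≤ r) {f : V → Fin r} (hf : IsTotalDomaticColoring G r f) :
    totalDominationNumber G = Fintype.card V / r := by
  have hlow : ∀ n ∈ {n | ∃ D : Finset V, #D = n ∧ IsTotalDominatingSet G D},
      Fintype.card V / r ≤ n := by
    rintro _ ⟨D, rfl, hD⟩
    exact Nat.div_le_of_le_mul (mul_comm r #D ▸ hD.card_le_card_mul hdeg)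
  obtain ⟨c, hc⟩ := Fintype.exists_card_fiber_lt_of_card_lt_mul f
    (n := Fintype.card V / r + 1) (by simpa using Nat.lt_mul_div_succ _ hr)
  have hmem : #{v | f v = c} ∈ {n | ∃ D : Finset V, #D = n ∧ IsTotalDominatingSet G D} :=
    ⟨_, rfl, hf.isTotalDominatingSet_fiber c⟩
  exact le_antisymm ((csInf_le (OrderBot.bddBelow _) hmem).trans (Nat.lt_succ_iff.1 hc))
    (le_csInf ⟨_, hmem⟩ hlow)

end TotalDomination

theorem ZMod.eq_zero_or_eq_or_eq_natCast_or_eq_neg {d : ℕ} (hd : 0 < d) (δ : ZMod (2 * d)) :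
    δ = 0 ∨ δ = d ∨
      ∃ j, j < d - 1 ∧ (δ = (j + 1 : ℕ) ∨ δ = -((j + 1 : ℕ) : ZMod (2 * d))) := by
  have : NeZero (2 * d) := ⟨by omega⟩
  obtain ⟨m, hm, rfl⟩ : ∃ m < 2 * d, δ = m :=
    ⟨δ.val, δ.val_lt, (ZMod.natCast_zmod_val δ).symm⟩
  rcases lt_trichotomy m d with h | rfl | h
  · rcases Nat.eq_zero_or_pos m with rfl | h0
    · exact .inl Nat.cast_zero
    · exact .inr <| .inr ⟨m - 1, by omega, .inl (by rw [Nat.sub_add_cancel h0])⟩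
  · exact .inr (.inl rfl)
  · refine .inr <| .inr ⟨2 * d - m - 1, by omega, .inr ?_⟩
    rw [show 2 * d - m - 1 + 1 = 2 * d - m by omega, Nat.cast_sub hm.le, ZMod.natCast_self]
    ring

section Torus

variable {d : ℕ} {k : Fin d → ℕ}

theorem torusGraph_adj_update_add (x : ∀ i, ZMod (k i)) (i : Fin d) {s : ℤ}
    (hs : s = 1 ∨ s = -1) (hk : k i ≠ 1) :
    (torusGraph d k).Adj x (update x i (x i + (s : ZMod (k i)))) := by
  have : Nontrivial (ZMod (k i)) := ZMod.nontrivial_iff.2 hk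
  refine (fromRel_adj _ _ _).2 ⟨fun h => ?_, ?_⟩
  · have := congrFun h i
    rcases hs with rfl | rfl <;> simp at this
  · have hj : ∀ j, j ≠ i → update x i (x i + (s : ZMod (k i))) j = x j :=
      fun j hj => update_of_ne hj _ _
    rcases hs with rfl | rfl
    · exact .inr ⟨i, by simp, hj⟩
    · exact .inl ⟨i, by simp, fun j hji => (hj j hji).symm⟩

theorem exists_eq_update_of_torusGraph_adj {x u : ∀ i, ZMod (k i)}
    (h : (torusGraph d k).Adj x u) :
    ∃ i, ∃ s : ℤ, (s = 1 ∨ s = -1) ∧ u = update x i (x i + (s : ZMod (k i))) := by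
  obtain ⟨-, ⟨i, hi, hj⟩ | ⟨i, hi, hj⟩⟩ := (fromRel_adj _ _ _).1 h
  · exact ⟨i, -1, .inr rfl,
      eq_update_iff.2 ⟨by rw [hi]; simp, fun j hji => (hj j hji).symm⟩⟩
  · exact ⟨i, 1, .inl rfl, eq_update_iff.2 ⟨by rw [hi]; simp, hj⟩⟩

theorem torusGraph_degree_le [∀ i, NeZero (k i)] [DecidableRel (torusGraph d k).Adj]
    (x : ∀ i, ZMod (k i)) : (torusGraph d k).degree x ≤ 2 * d := by
  classical
  let shift : Fin d × ℤ → ∀ i, ZMod (k i) := fun p =>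
    update x p.1 (x p.1 + (p.2 : ZMod (k p.1)))
  have hsub : (torusGraph d k).neighborFinset x ⊆ (univ ×ˢ {1, -1}).image shift := by
    intro u hu
    obtain ⟨i, s, hs, rfl⟩ :=
      exists_eq_update_of_torusGraph_adj ((mem_neighborFinset _ _ _).1 hu)
    exact mem_image.2 ⟨(i, s), by simpa using hs, rfl⟩
  calc (torusGraph d k).degree x ≤ #((univ ×ˢ {1, -1}).image shift) :=
        card_neighborFinset_eq_degree (torusGraph d k) x ▸ card_le_card hsub
    _ ≤ 2 * d := card_image_le.trans (by simp [mul_comm])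

/-- Coordinates are indexed from `0`, so coordinate `i < d - 1` has the paper's coefficient `i + 1`;
the last coordinate contributes `d` exactly when `x_{d-1} ≡ 2, 3 (mod 4)`. -/
def torusWeight (d i : ℕ) {n : ℕ} (t : ZMod n) : ZMod (2 * d) :=
  if i < d - 1 then (i + 1 : ℕ) * ZMod.cast t else d * ((ZMod.cast t : ZMod 4).val / 2 : ℕ)

def torusColoring (d : ℕ) (k : Fin d → ℕ) (x : ∀ i, ZMod (k i)) : ZMod (2 * d) :=
  ∑ i : Fin d, torusWeight d i (x i)

theorem torusColoring_update (x : ∀ i, ZMod (k i)) (i : Fin d) (a : ZMod (k i)) :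
    torusColoring d k (update x i a) =
      torusColoring d k x - torusWeight d i (x i) + torusWeight d i a := by
  simp only [torusColoring, apply_update (fun j : Fin d => torusWeight (n := k j) d j) x i a,
    sum_update_of_mem (mem_univ i), sum_eq_add_sum_sdiff_singleton_of_mem (mem_univ i)]
  abel

theorem torusWeight_add_intCast {i n : ℕ} (hi : i < d - 1) (hn : 2 * d ∣ n) (t : ZMod n)
    (s : ℤ) :
    torusWeight d i (t + (s : ZMod n)) = torusWeight d i t + (i + 1 : ℕ) * s := by
  simp only [torusWeight, if_pos hi, ZMod.cast_add hn, ZMod.cast_intCast hn]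
  ring

theorem exists_torusWeight_last_step {i n : ℕ} (hi : ¬ i < d - 1) (hn : 4 ∣ n) (t : ZMod n) :
    ∃ s : ℤ, (s = 1 ∨ s = -1) ∧ torusWeight d i (t + (s : ZMod n)) = torusWeight d i t ∧
      torusWeight d i (t - (s : ZMod n)) = torusWeight d i t + d := by
  -- `⌊c / 2⌋` on `ZMod 4` is constant along one step from `c` and flips along the other
  have key : ∀ c : ZMod 4, ∃ s ∈ ({1, -1} : Finset ℤ),
      (c + s).val / 2 = c.val / 2 ∧ (c - s).val / 2 + c.val / 2 = 1 := by decide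
  obtain ⟨s, hs, hplus, hminus⟩ := key (ZMod.cast t)
  have h2d : ((2 * d : ℕ) : ZMod (2 * d)) = 0 := ZMod.natCast_self _
  have hflip := congrArg (Nat.cast : ℕ → ZMod (2 * d)) hminus
  push_cast at h2d hflip
  refine ⟨s, by simpa using hs, ?_, ?_⟩ <;>
    simp only [torusWeight, if_neg hi, ZMod.cast_add hn, ZMod.cast_sub hn, ZMod.cast_intCast hn]
  · rw [hplus]
  · linear_combination (d : ZMod (2 * d)) * hflip -
      (((ZMod.cast t : ZMod 4).val / 2 : ℕ) : ZMod (2 * d)) * h2d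

theorem exists_adj_torusColoring_eq_add (hd : 0 < d)
    (hlast : 4 ∣ k ⟨d - 1, Nat.sub_one_lt hd.ne'⟩)
    (hrest : ∀ i : Fin d, (i : ℕ) < d - 1 → 2 * d ∣ k i) (x : ∀ i, ZMod (k i))
    (δ : ZMod (2 * d)) :
    ∃ u, (torusGraph d k).Adj x u ∧ torusColoring d k u = torusColoring d k x + δ := by
  suffices ∃ i, ∃ s : ℤ, (s = 1 ∨ s = -1) ∧ k i ≠ 1 ∧
      torusWeight d i (x i + (s : ZMod (k i))) = torusWeight d i (x i) + δ by
    obtain ⟨i, s, hs, hk, hw⟩ := this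
    exact ⟨_, torusGraph_adj_update_add x i hs hk, by rw [torusColoring_update, hw]; abel⟩
  have hne : ∀ {i : Fin d} {m : ℕ}, 1 < m → m ∣ k i → k i ≠ 1 := fun hm hdvd h => by
    have := Nat.eq_one_of_dvd_one (h ▸ hdvd)
    omega
  obtain ⟨s, hs, hs₀, hs₁⟩ :=
    exists_torusWeight_last_step (d := d) (lt_irrefl _) hlast (x ⟨d - 1, Nat.sub_one_lt hd.ne'⟩)
  rcases ZMod.eq_zero_or_eq_or_eq_natCast_or_eq_neg hd δ with rfl | rfl | ⟨j, hj, rfl | rfl⟩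
  · exact ⟨_, s, hs, hne (by norm_num) hlast, by rw [hs₀, add_zero]⟩
  · refine ⟨_, -s, by omega, hne (by norm_num) hlast, ?_⟩
    rw [Int.cast_neg, ← sub_eq_add_neg, hs₁]
  · have hk := hrest ⟨j, by omega⟩ hj
    exact ⟨_, 1, .inl rfl, hne (by omega) hk, by rw [torusWeight_add_intCast hj hk]; simp⟩
  · have hk := hrest ⟨j, by omega⟩ hj
    exact ⟨_, -1, .inr rfl, hne (by omega) hk, by rw [torusWeight_add_intCast hj hk]; simp⟩

theorem exists_isTotalDomaticColoring_torusGraph (hd : 0 < d)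
    (hlast : 4 ∣ k ⟨d - 1, Nat.sub_one_lt hd.ne'⟩)
    (hrest : ∀ i : Fin d, (i : ℕ) < d - 1 → 2 * d ∣ k i) :
    ∃ f, IsTotalDomaticColoring (torusGraph d k) (2 * d) f := by
  have : NeZero (2 * d) := ⟨by omega⟩
  refine ⟨(ZMod.finEquiv (2 * d)).symm ∘ torusColoring d k, fun x c => ?_⟩
  obtain ⟨u, hadj, hu⟩ :=
    exists_adj_torusColoring_eq_add hd hlast hrest x (ZMod.finEquiv _ c - torusColoring d k x)
  refine ⟨u, hadj, ?_⟩
  rw [comp_apply, RingEquiv.symm_apply_eq, hu, add_sub_cancel]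

end Torus

theorem totalDomatic_torus (d : ℕ) (hd : 0 < d) (k : Fin d → ℕ)
    [∀ i, NeZero (k i)]
    (hlast : 4 ∣ k ⟨d - 1, by omega⟩)
    (hrest : ∀ i : Fin d, (i : ℕ) < d - 1 → 2 * d ∣ k i) :
    totalDomaticNumber (torusGraph d k) = 2 * d ∧
    totalDominationNumber (torusGraph d k) = (∏ i, k i) / (2 * d) := by
  classical
  obtain ⟨f, hf⟩ := exists_isTotalDomaticColoring_torusGraph hd hlast hrest
  refine ⟨totalDomaticNumber_eq_of_degree_le hf (torusGraph_degree_le 0), ?_⟩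
  rw [totalDominationNumber_eq_of_degree_le (by omega) torusGraph_degree_le hf, Fintype.card_pi]
  simp only [ZMod.card]
end

section
/- Let d, k_1, …, k_d be positive integers with every k_i ≡ 0 (mod 2d+1). Then the torus C_{k_1} □ … □ C_{k_d} has domatic number exactly 2d+1, and its domination number equals (k_1·⋯·k_d)/(2d+1). -/
open SimpleGraph Finset

namespace DT
variable {d : ℕ} {k : Fin d → ℕ} [∀ i, NeZero (k i)]

noncomputable def F (hdvd : ∀ i, 2*d+1 ∣ k i) (x : ∀ i, ZMod (k i)) : ZMod (2*d+1) :=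
  ∑ i : Fin d, ((i : ℕ) + 1) * (ZMod.castHom (hdvd i) (ZMod (2*d+1)) (x i))

lemma F_add (hdvd : ∀ i, 2*d+1 ∣ k i) (x y : ∀ i, ZMod (k i)) :
    F hdvd (x + y) = F hdvd x + F hdvd y := by
  simp [F, Pi.add_apply, map_add, mul_add, Finset.sum_add_distrib]

lemma F_sub (hdvd : ∀ i, 2*d+1 ∣ k i) (x y : ∀ i, ZMod (k i)) :
    F hdvd (x - y) = F hdvd x - F hdvd y := by
  simp [F, Pi.sub_apply, map_sub, mul_sub, Finset.sum_sub_distrib]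

lemma F_update (hdvd : ∀ i, 2*d+1 ∣ k i) (x : ∀ i, ZMod (k i)) (i : Fin d) (t : ZMod (k i)) :
    F hdvd (Function.update x i t) = F hdvd x +
      ((i : ℕ) + 1) * (ZMod.castHom (hdvd i) (ZMod (2*d+1)) t
        - ZMod.castHom (hdvd i) (ZMod (2*d+1)) (x i)) := by
  unfold F
  rw [← Finset.add_sum_erase _ (fun j : Fin d => ((j : ℕ) + 1) * (ZMod.castHom (hdvd j) (ZMod (2*d+1)) (Function.update x i t j))) (Finset.mem_univ i),
      ← Finset.add_sum_erase _ (fun j : Fin d => ((j : ℕ) + 1) * (ZMod.castHom (hdvd j) (ZMod (2*d+1)) (x j))) (Finset.mem_univ i)]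
  rw [Finset.sum_congr rfl (fun j hj => by
    rw [Function.update_of_ne (Finset.ne_of_mem_erase hj)])]
  simp only [Function.update_self]
  ring

lemma one_ne_zero_zmod (hd : 0 < d) (hdvd : ∀ i, 2*d+1 ∣ k i) (i : Fin d) :
    (1 : ZMod (k i)) ≠ 0 := by
  haveI : Fact (1 < k i) := ⟨by
    have := Nat.le_of_dvd (Nat.pos_of_ne_zero (NeZero.ne (k i))) (hdvd i)
    omega⟩
  exact one_ne_zero

lemma ne_update_add (hd : 0 < d) (hdvd : ∀ i, 2*d+1 ∣ k i) (x : ∀ i, ZMod (k i)) (i : Fin d)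
    (c : ZMod (k i)) (hc : c ≠ 0) : x ≠ Function.update x i (x i + c) := by
  intro h
  have := congrFun h i
  rw [Function.update_self] at this
  exact hc (by linear_combination -this)

lemma adj_update_add (hd : 0 < d) (hdvd : ∀ i, 2*d+1 ∣ k i) (x : ∀ i, ZMod (k i)) (i : Fin d) :
    (torusGraph d k).Adj x (Function.update x i (x i + 1)) := by
  refine ⟨ne_update_add hd hdvd x i 1 (one_ne_zero_zmod hd hdvd i), Or.inr ⟨i, ?_, ?_⟩⟩
  · rw [Function.update_self]
  · intro j hj; rw [Function.update_of_ne hj]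

lemma adj_update_sub (hd : 0 < d) (hdvd : ∀ i, 2*d+1 ∣ k i) (x : ∀ i, ZMod (k i)) (i : Fin d) :
    (torusGraph d k).Adj x (Function.update x i (x i - 1)) := by
  refine ⟨?_, Or.inl ⟨i, ?_, ?_⟩⟩
  · have : x i - 1 = x i + (-1) := by ring
    rw [this]
    exact ne_update_add hd hdvd x i (-1) (by
      simpa using (one_ne_zero_zmod hd hdvd i))
  · rw [Function.update_self]; ring
  · intro j hj; rw [Function.update_of_ne hj]

lemma exists_witness (hd : 0 < d) (hdvd : ∀ i, 2*d+1 ∣ k i) (x : ∀ i, ZMod (k i))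
    (c : ZMod (2*d+1)) :
    ∃ u, (u = x ∨ (torusGraph d k).Adj x u) ∧ F hdvd u = c := by
  haveI : NeZero (2*d+1) := ⟨by omega⟩
  by_cases h0 : c - F hdvd x = 0
  · exact ⟨x, Or.inl rfl, by linear_combination -h0⟩
  · set δ := c - F hdvd x with hδ
    set n := δ.val with hn
    have hnpos : 0 < n := by
      rcases Nat.eq_zero_or_pos n with h | h
      · exact absurd (by rw [← ZMod.val_eq_zero]; exact h) h0
      · exact h
    have hnlt : n < 2*d+1 := ZMod.val_lt δ
    have hcast : ((n : ℕ) : ZMod (2*d+1)) = δ := by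
      rw [hn, ZMod.natCast_val, ZMod.cast_id]
    by_cases hle : n ≤ d
    · set i : Fin d := ⟨n - 1, by omega⟩ with hi
      refine ⟨Function.update x i (x i + 1), Or.inr (adj_update_add hd hdvd x i), ?_⟩
      rw [F_update, map_add, map_one]
      have hiv : ((i : ℕ) : ZMod (2*d+1)) + 1 = δ := by
        have e1 : ((i : ℕ) : ZMod (2*d+1)) = ((n - 1 : ℕ) : ZMod (2*d+1)) := rfl
        rw [e1, Nat.cast_sub hnpos, Nat.cast_one, hcast]
        ring
      have e2 : F hdvd x + ((i:ℕ)+1) * (ZMod.castHom (hdvd i) (ZMod (2*d+1)) (x i) + 1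
          - ZMod.castHom (hdvd i) (ZMod (2*d+1)) (x i))
          = F hdvd x + (((i:ℕ) : ZMod (2*d+1)) + 1) := by push_cast; ring
      rw [e2, hiv, hδ]; ring
    · set i : Fin d := ⟨2*d - n, by omega⟩ with hi
      refine ⟨Function.update x i (x i - 1), Or.inr (adj_update_sub hd hdvd x i), ?_⟩
      rw [F_update, map_sub, map_one]
      have e : ((i:ℕ) : ZMod (2*d+1)) + 1 = ((2*d+1 : ℕ) : ZMod (2*d+1)) - (n : ZMod (2*d+1)) := by
        have e1 : ((i : ℕ) : ZMod (2*d+1)) = ((2*d - n : ℕ) : ZMod (2*d+1)) := rfl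
        rw [e1, Nat.cast_sub (by omega : n ≤ 2*d)]
        push_cast; ring
      rw [ZMod.natCast_self, zero_sub, hcast] at e
      have e2 : F hdvd x + ((i:ℕ)+1) * (ZMod.castHom (hdvd i) (ZMod (2*d+1)) (x i) - 1
          - ZMod.castHom (hdvd i) (ZMod (2*d+1)) (x i))
          = F hdvd x - (((i:ℕ) : ZMod (2*d+1)) + 1) := by push_cast; ring
      rw [e2, e, hδ]; ring

noncomputable def nbhd (x : ∀ i, ZMod (k i)) : Finset (∀ i, ZMod (k i)) :=
  insert x ((Finset.univ.image fun i : Fin d => Function.update x i (x i + 1)) ∪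
    (Finset.univ.image fun i : Fin d => Function.update x i (x i - 1)))

lemma card_nbhd_le (x : ∀ i, ZMod (k i)) : (nbhd x).card ≤ 2*d + 1 := by
  have h1 := Finset.card_image_le (s := (Finset.univ : Finset (Fin d)))
    (f := fun i : Fin d => Function.update x i (x i + 1))
  have h2 := Finset.card_image_le (s := (Finset.univ : Finset (Fin d)))
    (f := fun i : Fin d => Function.update x i (x i - 1))
  have h3 := Finset.card_union_le
    (Finset.univ.image fun i : Fin d => Function.update x i (x i + 1))
    (Finset.univ.image fun i : Fin d => Function.update x i (x i - 1))
  have h4 := Finset.card_insert_le x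
    ((Finset.univ.image fun i : Fin d => Function.update x i (x i + 1)) ∪
     (Finset.univ.image fun i : Fin d => Function.update x i (x i - 1)))
  simp only [Finset.card_univ, Fintype.card_fin] at h1 h2
  unfold nbhd
  omega

lemma mem_nbhd (x u : ∀ i, ZMod (k i)) (h : u = x ∨ (torusGraph d k).Adj x u) :
    u ∈ nbhd x := by
  rcases h with rfl | ⟨hne, h | h⟩
  · exact Finset.mem_insert_self _ _
  · -- x i = u i + 1, so u = update x i (x i - 1)
    rcases h with ⟨i, hi, hj⟩
    apply Finset.mem_insert_of_mem
    apply Finset.mem_union_right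
    rw [Finset.mem_image]
    refine ⟨i, Finset.mem_univ i, ?_⟩
    funext j
    by_cases hji : j = i
    · subst hji
      rw [Function.update_self]
      linear_combination hi
    · rw [Function.update_of_ne hji]
      exact hj j hji
  · rcases h with ⟨i, hi, hj⟩
    apply Finset.mem_insert_of_mem
    apply Finset.mem_union_left
    rw [Finset.mem_image]
    refine ⟨i, Finset.mem_univ i, ?_⟩
    funext j
    by_cases hji : j = i
    · subst hji
      rw [Function.update_self]
      exact hi.symm
    · rw [Function.update_of_ne hji]
      exact (hj j hji).symm


lemma F_zero (hdvd : ∀ i, 2*d+1 ∣ k i) : F hdvd (fun _ => 0) = 0 := by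
  simp [F]

lemma F_surj (hd : 0 < d) (hdvd : ∀ i, 2*d+1 ∣ k i) (c : ZMod (2*d+1)) :
    ∃ z, F hdvd z = c := by
  haveI : NeZero (2*d+1) := ⟨by omega⟩
  set i₀ : Fin d := ⟨0, hd⟩ with hi₀
  refine ⟨Function.update (fun _ => 0) i₀ ((c.val : ℕ) : ZMod (k i₀)), ?_⟩
  rw [F_update, F_zero, map_natCast, map_zero]
  have : ((i₀ : ℕ) : ZMod (2*d+1)) = 0 := by norm_num [hi₀]
  rw [this]
  simp [ZMod.natCast_val, ZMod.cast_id]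

open Classical in
lemma fiber_card (hd : 0 < d) (hdvd : ∀ i, 2*d+1 ∣ k i) (c : ZMod (2*d+1)) :
    (Finset.univ.filter fun x => F hdvd x = c).card =
    (Finset.univ.filter fun x => F hdvd x = 0).card := by
  obtain ⟨z, hz⟩ := F_surj hd hdvd c
  apply Finset.card_bij' (fun x _ => x - z) (fun y _ => y + z)
  · intro a ha
    rw [Finset.mem_filter] at ha ⊢
    rw [F_sub, ha.2, hz]
    simp
  · intro a ha
    rw [Finset.mem_filter] at ha ⊢
    rw [F_add, ha.2, hz]
    simp
  · intro a _; ring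
  · intro a _; ring

open Classical in
lemma card_eq (hd : 0 < d) (hdvd : ∀ i, 2*d+1 ∣ k i) :
    Fintype.card (∀ i, ZMod (k i)) =
      (2*d+1) * (Finset.univ.filter fun x => F hdvd x = 0).card := by
  haveI : NeZero (2*d+1) := ⟨by omega⟩
  have h := Finset.card_eq_sum_card_fiberwise
    (s := (Finset.univ : Finset (∀ i, ZMod (k i))))
    (t := (Finset.univ : Finset (ZMod (2*d+1)))) (f := F hdvd) (fun x _ => Finset.mem_univ _)
  rw [Finset.card_univ] at h
  rw [h, Finset.sum_congr rfl (fun c _ => fiber_card hd hdvd c), Finset.sum_const,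
    Finset.card_univ, ZMod.card, smul_eq_mul]

end DT

theorem domatic_torus (d : ℕ) (hd : 0 < d) (k : Fin d → ℕ)
    (hpos : ∀ i, 0 < k i) [∀ i, NeZero (k i)]
    (hdvd : ∀ i, 2 * d + 1 ∣ k i) :
    domaticNumber (torusGraph d k) = 2 * d + 1 ∧
    dominationNumber (torusGraph d k) = (∏ i, k i) / (2 * d + 1) := by
  classical
  haveI : NeZero (2*d+1) := ⟨by omega⟩
  have hcardV : Fintype.card (∀ i, ZMod (k i)) = ∏ i, k i := by
    rw [Fintype.card_pi]
    exact Finset.prod_congr rfl fun i _ => ZMod.card (k i)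
  set D₀ : Finset (∀ i, ZMod (k i)) :=
    Finset.univ.filter (fun x => DT.F hdvd x = 0) with hD₀
  have hmq : (∏ i, k i) = (2*d+1) * D₀.card := by
    rw [← hcardV]; exact DT.card_eq hd hdvd
  have hq : D₀.card = (∏ i, k i) / (2*d+1) := by
    rw [hmq, Nat.mul_div_cancel_left _ (by omega)]
  constructor
  · -- domatic number
    have hmem : (2*d+1) ∈ {K | ∃ f : (∀ i, ZMod (k i)) → Fin K,
        IsDomaticColoring (torusGraph d k) K f} := by
      refine ⟨fun x => ⟨(DT.F hdvd x).val, ZMod.val_lt _⟩, ?_⟩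
      intro v c
      obtain ⟨u, hu, hF⟩ := DT.exists_witness hd hdvd v ((c : ℕ) : ZMod (2*d+1))
      refine ⟨u, hu, ?_⟩
      apply Fin.ext
      simp only [hF]
      exact ZMod.val_cast_of_lt c.isLt
    have hub : ∀ K ∈ {K | ∃ f : (∀ i, ZMod (k i)) → Fin K,
        IsDomaticColoring (torusGraph d k) K f}, K ≤ 2*d+1 := by
      rintro K ⟨f, hf⟩
      choose g hg1 hg2 using hf (fun _ => 0)
      have hmap : ∀ c ∈ (Finset.univ : Finset (Fin K)), g c ∈ DT.nbhd (fun _ => 0) :=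
        fun c _ => DT.mem_nbhd _ _ (hg1 c)
      have hinj : Set.InjOn g ↑(Finset.univ : Finset (Fin K)) := by
        intro a _ b _ hab
        rw [← hg2 a, ← hg2 b, hab]
      have := Finset.card_le_card_of_injOn g hmap hinj
      rw [Finset.card_univ, Fintype.card_fin] at this
      exact this.trans (DT.card_nbhd_le _)
    exact le_antisymm (csSup_le ⟨_, hmem⟩ hub) (le_csSup ⟨2*d+1, hub⟩ hmem)
  · -- domination number
    have hmem : (∏ i, k i) / (2*d+1) ∈ {n | ∃ D : Finset (∀ i, ZMod (k i)),
        D.card = n ∧ IsDominatingSet (torusGraph d k) ↑D} := by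
      refine ⟨D₀, hq, ?_⟩
      intro v
      obtain ⟨u, hu, hF⟩ := DT.exists_witness hd hdvd v 0
      rcases hu with rfl | hadj
      · left
        simp only [hD₀, Finset.coe_filter, Set.mem_setOf_eq, Finset.mem_univ, true_and]
        exact hF
      · right
        refine ⟨u, ?_, hadj⟩
        simp only [hD₀, Finset.coe_filter, Set.mem_setOf_eq, Finset.mem_univ, true_and]
        exact hF
    have hlb : ∀ n ∈ {n | ∃ D : Finset (∀ i, ZMod (k i)),
        D.card = n ∧ IsDominatingSet (torusGraph d k) ↑D}, (∏ i, k i) / (2*d+1) ≤ n := by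
      rintro n ⟨D, hcardD, hdom⟩
      have hcover : (Finset.univ : Finset (∀ i, ZMod (k i))) ⊆ D.biUnion DT.nbhd := by
        intro v _
        rw [Finset.mem_biUnion]
        rcases hdom v with hv | ⟨u, hu, hadj⟩
        · exact ⟨v, Finset.mem_coe.mp hv, DT.mem_nbhd _ _ (Or.inl rfl)⟩
        · exact ⟨u, Finset.mem_coe.mp hu, DT.mem_nbhd _ _ (Or.inr hadj.symm)⟩
      have h1 := Finset.card_le_card hcover
      have h2 := Finset.card_biUnion_le (s := D) (t := DT.nbhd)
      have h3 : ∑ u ∈ D, (DT.nbhd u).card ≤ D.card * (2*d+1) := by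
        calc ∑ u ∈ D, (DT.nbhd u).card ≤ ∑ _u ∈ D, (2*d+1) :=
              Finset.sum_le_sum fun u _ => DT.card_nbhd_le u
          _ = D.card * (2*d+1) := by rw [Finset.sum_const, smul_eq_mul]
      rw [Finset.card_univ, hcardV] at h1
      have h4 : (2*d+1) * (((∏ i, k i) / (2*d+1))) ≤ (2*d+1) * n := by
        rw [← hq, ← hmq] at *
        calc (∏ i, k i) ≤ (D.biUnion DT.nbhd).card := h1
          _ ≤ ∑ u ∈ D, (DT.nbhd u).card := h2
          _ ≤ D.card * (2*d+1) := h3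
          _ = (2*d+1) * n := by rw [hcardD, Nat.mul_comm]
      exact Nat.le_of_mul_le_mul_left h4 (by omega)
    exact le_antisymm (Nat.sInf_le hmem) (le_csInf ⟨_, hmem⟩ hlb)
end
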